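/- arXiv:1212.2544 — 3 statements merged into one kernel-verified Lean document; each statement's English description precedes it below -/
import Mathlib

section
/- Let P ⊂ ℝⁿ be a convex polytope and K ⊂ ℝⁿ a convex body such that 0 lies in the interior of P ∩ K, and suppose affine subspaces A_F satisfying conditions (a), (b), (c) are chosen for all faces F of P. Then for every face F of P, ⟨x_F, x_{F*}⟩ = ⟨y_F, y_{F*}⟩ = 1. Moreover, for each face F there exist constants c > 0 and δ₀ > 0, depending only on P, F and A_F (not on K), such that if δ := d_H(K,P) ≤ δ₀, then |x_F − c_F| ≤ cδ and |y_F − c_F| ≤ cδ. -/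
/-!
Write `x_F = t_F a` and `x_{F*} = t_{F*} a'` with `a ∈ A_F`, `a' ∈ A_{F*}`; by (c) both inner
products in the claim equal `t_F t_{F*}`. This is `≤ 1` since `x_F ∈ K` and `x_{F*} ∈ K°`.
Conversely, a hyperplane `{⟪·, w⟫ = 1}` through `t_F A_F` supporting `K` has `w ∈ K°`, and the
dimension count (b) forces `t_F w ∈ A_{F*}`; if `t_F t_{F*} < 1`, the point `t_{F*} t_F w` of
`t_{F*} A_{F*}` would lie in the interior of `K°`.

For stability, if `B(0, r) ⊆ P` and `δ = d_H(K, P) ≤ r` then `(1 - δ / r) P ⊆ K`, so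
`t_F ≥ 1 - δ / r`. The tangent cone of the polytope `P` at `c_F` is finitely generated, hence
closed, and it meets the half-space `direction A_F + ℝ≥0 c_F` only in `0`, because
`A_F ∩ P = {c_F}` and `c_F` lies on a supporting hyperplane avoiding `0`. By compactness of the
unit sphere the distance to `P` from `c_F + v`, `v` in that half-space, is at least `κ ‖v‖`;
applied to `v = x_F - c_F + max (1 - t_F) 0 • c_F` this bounds `‖x_F - c_F‖` and `|t_F - 1|`
linearly in `δ`.
-/

open MeasureTheory Set Submodule
open scoped RealInnerProductSpace Pointwise Classical

noncomputable section

abbrev Euc (n : ℕ) := EuclideanSpace ℝ (Fin n)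

variable {n : ℕ}

/-- A convex body: a compact convex set with nonempty interior. -/
def IsConvexBody (K : Set (Euc n)) : Prop :=
  Convex ℝ K ∧ IsCompact K ∧ (interior K).Nonempty

/-- The polar of a set. -/
def polarSet (K : Set (Euc n)) : Set (Euc n) := {y | ∀ x ∈ K, ⟪x, y⟫ ≤ 1}

/-- Volume (as a real number). -/
def vol (A : Set (Euc n)) : ℝ := (volume A).toReal

/-- The volume product of a symmetric convex body. -/
def volProd (K : Set (Euc n)) : ℝ := vol K * vol (polarSet K)

/-- Banach–Mazur distance between symmetric convex bodies. -/
def bmDist (K L : Set (Euc n)) : ℝ :=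
  sInf {c : ℝ | 1 ≤ c ∧ ∃ T : (Euc n) ≃ₗ[ℝ] (Euc n), L ⊆ T '' K ∧ T '' K ⊆ c • L}

/-- The dimension of a set: dimension of the linear span of `A - A`. -/
def setDim (A : Set (Euc n)) : ℕ :=
  Module.finrank ℝ (Submodule.span ℝ (A - A) : Submodule ℝ (Euc n))

/-- Dimension with the convention `dim ∅ = -1`. -/
def edim (A : Set (Euc n)) : ℤ := if A = ∅ then -1 else (setDim A : ℤ)

/-- ℓ1-sum, with the convention `A ⊕₁ ∅ = A`, `∅ ⊕₁ B = B`. -/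
def l1Sum (A B : Set (Euc n)) : Set (Euc n) :=
  if A = ∅ then B else if B = ∅ then A else convexHull ℝ (A ∪ B)

/-- The centroid of a set, computed with respect to the Hausdorff measure of dimension
`setDim A` (this is the Lebesgue measure on the affine hull for convex sets). -/
def centroid (A : Set (Euc n)) : Euc n :=
  ((μH[(setDim A : ℝ)] A).toReal)⁻¹ • ∫ x in A, x ∂(μH[(setDim A : ℝ)])

/-- `F` is a (proper, nonempty) face of `P` cut out by a supporting hyperplane whose normal
vector lies in `V`. -/
def IsFaceIn (V : Submodule ℝ (Euc n)) (P F : Set (Euc n)) : Prop :=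
  ∃ (u : Euc n) (b : ℝ), u ∈ V ∧ u ≠ 0 ∧ (∀ x ∈ P, ⟪x, u⟫ ≤ b) ∧
    (∃ x ∈ P, ⟪x, u⟫ = b) ∧ F = {x ∈ P | ⟪x, u⟫ = b} ∧ F ≠ P

/-- `F` is a face of `P` (cut out by a supporting hyperplane). -/
def IsFaceOf (P F : Set (Euc n)) : Prop := IsFaceIn ⊤ P F

/-- The polar of `K` computed inside the subspace `V`. -/
def polarIn (V : Submodule ℝ (Euc n)) (K : Set (Euc n)) : Set (Euc n) :=
  {y | y ∈ V ∧ ∀ x ∈ K, ⟪x, y⟫ ≤ 1}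

/-- The dual face of a face `F` of `P`, computed inside the subspace `V`. -/
def dualFaceIn (V : Submodule ℝ (Euc n)) (P F : Set (Euc n)) : Set (Euc n) :=
  {y ∈ polarIn V P | ∀ x ∈ F, ⟪x, y⟫ = 1}

/-- The dual face `F* = {y ∈ P° : ⟨x,y⟩ = 1 ∀ x ∈ F}`. -/
def dualFace (P F : Set (Euc n)) : Set (Euc n) := dualFaceIn ⊤ P F

/-- A convex polytope: convex hull of finitely many points. -/
def IsPolytope (P : Set (Euc n)) : Prop := ∃ S : Finset (Euc n), P = convexHull ℝ (S : Set (Euc n))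

/-- A flag over `P`: an increasing chain of faces `F⁰ ⊂ F¹ ⊂ ⋯ ⊂ F^{n-1}` with `dim F^k = k`. -/
def IsFlagOf (P : Set (Euc n)) (𝔽 : Fin n → Set (Euc n)) : Prop :=
  (∀ k, IsFaceOf P (𝔽 k)) ∧ (∀ k : Fin n, setDim (𝔽 k) = (k : ℕ)) ∧
  (∀ k l : Fin n, k ≤ l → 𝔽 k ⊆ 𝔽 l)

/-- The volume of the simplex `Z_𝔽 = conv{0, z_{F⁰}, …, z_{F^{n-1}}}`. -/
def flagVol (Z : Set (Euc n) → Euc n) (𝔽 : Fin n → Set (Euc n)) : ℝ :=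
  vol (convexHull ℝ (insert (0 : Euc n) (Set.range fun k => Z (𝔽 k))))

/-- The volume function `V(Z) = Σ_𝔽 |Z_𝔽|`, sum over all flags of `P`. -/
def Vfun (P : Set (Euc n)) (Z : Set (Euc n) → Euc n) : ℝ :=
  ∑ᶠ (𝔽 : Fin n → Set (Euc n)) (_ : IsFlagOf P 𝔽), flagVol Z 𝔽

/-- The partial volume function: sum over all flags of `P` containing the face `G`. -/
def VfunG (P G : Set (Euc n)) (Z : Set (Euc n) → Euc n) : ℝ :=
  ∑ᶠ (𝔽 : Fin n → Set (Euc n)) (_ : IsFlagOf P 𝔽 ∧ G ∈ Set.range 𝔽), flagVol Z 𝔽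

/-- `x_F` is the point of `(t_F • A_F) ∩ ∂K` nearest to `c_F`, where `t_F • A_F` is
tangent to `K`. -/
def TangentXPoint (K AF : Set (Euc n)) (cF : Euc n) (tF : ℝ) (xF : Euc n) : Prop :=
  0 < tF ∧ (tF • AF) ∩ interior K = ∅ ∧ xF ∈ (tF • AF) ∩ frontier K ∧
  ∀ z ∈ (tF • AF) ∩ frontier K, dist cF xF ≤ dist cF z

/-- The pair of points `x_F, y_F` constructed from `K`, `A_F`, `c_F`. -/
def TangentPointAt (K AF : Set (Euc n)) (cF : Euc n) (tF : ℝ) (xF yF : Euc n) : Prop :=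
  TangentXPoint K AF cF tF xF ∧ yF = tF • cF

/-- Conditions (a) and (b) for the affine subspace `A F` at a face `F` of `body`. -/
def GoodAt (body : Set (Euc n)) (A : Set (Euc n) → Set (Euc n)) (c : Set (Euc n) → Euc n)
    (F : Set (Euc n)) : Prop :=
  (∃ S : AffineSubspace ℝ (Euc n), A F = (S : Set (Euc n))) ∧
  A F ∩ body = {c F} ∧ c F ∈ intrinsicInterior ℝ F ∧
  setDim (A F) + setDim F + 1 = n

/-- Conditions (a), (b), (c) for the family of affine subspaces `A_F` attached to the faces
of `P` and of `P°`. -/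
def GoodFamily (P : Set (Euc n)) (A : Set (Euc n) → Set (Euc n)) (c : Set (Euc n) → Euc n) : Prop :=
  (∀ F, IsFaceOf P F → GoodAt P A c F ∧
      ∀ x ∈ A F, ∀ y ∈ A (dualFace P F), ⟪x, y⟫ = 1) ∧
  (∀ G, IsFaceOf (polarSet P) G → GoodAt (polarSet P) A c G)

/-- Hanner polytopes: symmetric segments, closed under ℓ1 and ℓ∞ sums of
linearly independent summands. -/
inductive IsHanner : Set (Euc n) → Prop
  | seg (x : Euc n) (hx : x ≠ 0) : IsHanner (segment ℝ (-x) x)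
  | l1 {A B : Set (Euc n)} (hA : IsHanner A) (hB : IsHanner B)
      (hspan : Submodule.span ℝ A ⊓ Submodule.span ℝ B = ⊥) :
      IsHanner (convexHull ℝ (A ∪ B))
  | linf {A B : Set (Euc n)} (hA : IsHanner A) (hB : IsHanner B)
      (hspan : Submodule.span ℝ A ⊓ Submodule.span ℝ B = ⊥) :
      IsHanner (A + B)

/-- The rules of Definition 4.1 defining `A` on the faces of the ℓ1-sum `H₁ ⊕₁ H₂` from the
families `A₁, A₂` for `H₁, H₂`. -/
def L1Rules (H₁ H₂ : Set (Euc n)) (A₁ A₂ A : Set (Euc n) → Set (Euc n)) : Prop :=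
  (∀ F₁, IsFaceIn (Submodule.span ℝ H₁) H₁ F₁ →
      A F₁ = A₁ F₁ + (Submodule.span ℝ H₂ : Set (Euc n))) ∧
  (∀ F₂, IsFaceIn (Submodule.span ℝ H₂) H₂ F₂ →
      A F₂ = (Submodule.span ℝ H₁ : Set (Euc n)) + A₂ F₂) ∧
  (∀ F₁ F₂, IsFaceIn (Submodule.span ℝ H₁) H₁ F₁ → IsFaceIn (Submodule.span ℝ H₂) H₂ F₂ →
      A (convexHull ℝ (F₁ ∪ F₂)) =
        ((setDim F₁ + 1 : ℝ) / (setDim F₁ + setDim F₂ + 2)) • A₁ F₁ +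
        ((setDim F₂ + 1 : ℝ) / (setDim F₁ + setDim F₂ + 2)) • A₂ F₂)

/-- The rules of Definition 4.1 defining `A` on the faces of the ℓ∞-sum `H₁ ⊕∞ H₂` from the
families `A₁, A₂` for `H₁, H₂`. -/
def LInfRules (H₁ H₂ : Set (Euc n)) (A₁ A₂ A : Set (Euc n) → Set (Euc n)) : Prop :=
  (∀ F₁, IsFaceIn (Submodule.span ℝ H₁) H₁ F₁ → A (F₁ + H₂) = A₁ F₁) ∧
  (∀ F₂, IsFaceIn (Submodule.span ℝ H₂) H₂ F₂ → A (H₁ + F₂) = A₂ F₂) ∧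
  (∀ F₁ F₂, IsFaceIn (Submodule.span ℝ H₁) H₁ F₁ → IsFaceIn (Submodule.span ℝ H₂) H₂ F₂ →
      A (F₁ + F₂) = A₁ F₁ + A₂ F₂ +
        (Submodule.span ℝ
          {(((setDim H₁ : ℝ) - setDim F₁)⁻¹ • centroid F₁ -
            ((setDim H₂ : ℝ) - setDim F₂)⁻¹ • centroid F₂)} : Set (Euc n)))

/-- A Hanner polytope `H` together with its recursively defined family `A` of affine
subspaces, paired with the (relative) polar Hanner polytope `H'` and its family `A'`. -/
inductive HannerRep :
    Set (Euc n) → (Set (Euc n) → Set (Euc n)) → Set (Euc n) → (Set (Euc n) → Set (Euc n)) → Prop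
  | seg (x : Euc n) (hx : x ≠ 0) (A A' : Set (Euc n) → Set (Euc n))
      (hA1 : A {x} = {x}) (hA2 : A {-x} = {-x})
      (hA'1 : A' {(‖x‖ ^ 2)⁻¹ • x} = {(‖x‖ ^ 2)⁻¹ • x})
      (hA'2 : A' {-((‖x‖ ^ 2)⁻¹ • x)} = {-((‖x‖ ^ 2)⁻¹ • x)}) :
      HannerRep (segment ℝ (-x) x) A
        (segment ℝ (-((‖x‖ ^ 2)⁻¹ • x)) ((‖x‖ ^ 2)⁻¹ • x)) A'
  | l1 {H₁ H₂ H₁' H₂' : Set (Euc n)} {A₁ A₂ A₁' A₂' A A' : Set (Euc n) → Set (Euc n)}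
      (h₁ : HannerRep H₁ A₁ H₁' A₁') (h₂ : HannerRep H₂ A₂ H₂' A₂')
      (horth : Submodule.span ℝ (H₂ ∪ H₂') ≤ (Submodule.span ℝ (H₁ ∪ H₁'))ᗮ)
      (hA : L1Rules H₁ H₂ A₁ A₂ A) (hA' : LInfRules H₁' H₂' A₁' A₂' A') :
      HannerRep (convexHull ℝ (H₁ ∪ H₂)) A (H₁' + H₂') A'
  | linf {H₁ H₂ H₁' H₂' : Set (Euc n)} {A₁ A₂ A₁' A₂' A A' : Set (Euc n) → Set (Euc n)}
      (h₁ : HannerRep H₁ A₁ H₁' A₁') (h₂ : HannerRep H₂ A₂ H₂' A₂')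
      (horth : Submodule.span ℝ (H₂ ∪ H₂') ≤ (Submodule.span ℝ (H₁ ∪ H₁'))ᗮ)
      (hA : LInfRules H₁ H₂ A₁ A₂ A) (hA' : L1Rules H₁' H₂' A₁' A₂' A') :
      HannerRep (H₁ + H₂) A (convexHull ℝ (H₁' ∪ H₂')) A'

/-- The standard symmetric segment `[-e_j, e_j]`. -/
def stdSeg (j : Fin n) : Set (Euc n) :=
  segment ℝ (-(EuclideanSpace.single j (1 : ℝ))) (EuclideanSpace.single j (1 : ℝ))

/-- A standard Hanner polytope `H` (built from the segments `[-e_j, e_j]`) together with its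
recursively defined family `A` of affine subspaces, paired with the polar standard Hanner
polytope `H'` and its family `A'`. -/
inductive StdHannerRep :
    Set (Euc n) → (Set (Euc n) → Set (Euc n)) → Set (Euc n) → (Set (Euc n) → Set (Euc n)) → Prop
  | seg (j : Fin n) (A A' : Set (Euc n) → Set (Euc n))
      (hA1 : A {EuclideanSpace.single j (1 : ℝ)} = {EuclideanSpace.single j (1 : ℝ)})
      (hA2 : A {-EuclideanSpace.single j (1 : ℝ)} = {-EuclideanSpace.single j (1 : ℝ)})
      (hA'1 : A' {EuclideanSpace.single j (1 : ℝ)} = {EuclideanSpace.single j (1 : ℝ)})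
      (hA'2 : A' {-EuclideanSpace.single j (1 : ℝ)} = {-EuclideanSpace.single j (1 : ℝ)}) :
      StdHannerRep (stdSeg j) A (stdSeg j) A'
  | l1 {H₁ H₂ H₁' H₂' : Set (Euc n)} {A₁ A₂ A₁' A₂' A A' : Set (Euc n) → Set (Euc n)}
      (h₁ : StdHannerRep H₁ A₁ H₁' A₁') (h₂ : StdHannerRep H₂ A₂ H₂' A₂')
      (hspan : Submodule.span ℝ (H₁ ∪ H₁') ⊓ Submodule.span ℝ (H₂ ∪ H₂') = ⊥)
      (hA : L1Rules H₁ H₂ A₁ A₂ A) (hA' : LInfRules H₁' H₂' A₁' A₂' A') :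
      StdHannerRep (convexHull ℝ (H₁ ∪ H₂)) A (H₁' + H₂') A'
  | linf {H₁ H₂ H₁' H₂' : Set (Euc n)} {A₁ A₂ A₁' A₂' A A' : Set (Euc n) → Set (Euc n)}
      (h₁ : StdHannerRep H₁ A₁ H₁' A₁') (h₂ : StdHannerRep H₂ A₂ H₂' A₂')
      (hspan : Submodule.span ℝ (H₁ ∪ H₁') ⊓ Submodule.span ℝ (H₂ ∪ H₂') = ⊥)
      (hA : LInfRules H₁ H₂ A₁ A₂ A) (hA' : L1Rules H₁' H₂' A₁' A₂' A') :
      StdHannerRep (H₁ + H₂) A (convexHull ℝ (H₁' ∪ H₂')) A'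

/-- `H` is a standard Hanner polytope. -/
def IsStdHanner (H : Set (Euc n)) : Prop :=
  ∃ (A : Set (Euc n) → Set (Euc n)) (H' : Set (Euc n)) (A' : Set (Euc n) → Set (Euc n)),
    StdHannerRep H A H' A'

/-- The unit cube `B∞ⁿ = [-1,1]ⁿ`. -/
def cube (n : ℕ) : Set (Euc n) := {x | ∀ i, |x i| ≤ 1}

/-- The unit cross-polytope `B₁ⁿ`. -/
def crossPolytope (n : ℕ) : Set (Euc n) := {x | ∑ i, |x i| ≤ 1}

/-- The coordinate subspace `ℝ^(v) = span{e_j : j ∈ supp v}`. -/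
def suppSpan (v : Euc n) : Submodule ℝ (Euc n) :=
  Submodule.span ℝ {x : Euc n | ∃ j, v j ≠ 0 ∧ x = EuclideanSpace.single j (1 : ℝ)}

/-- Orthogonal projection of a set onto a subspace. -/
def projSet (V : Submodule ℝ (Euc n)) (K : Set (Euc n)) : Set (Euc n) :=
  (fun x => (orthogonalProjection V x : Euc n)) '' K

end

section TopologicalVectorSpace

open Filter Topology

lemma exists_pos_smul_mem_of_mem_interior {E : Type*} [AddCommGroup E] [Module ℝ E]
    [TopologicalSpace E] [ContinuousSMul ℝ E] {P : Set E} (h0P : (0 : E) ∈ interior P) (u : E) :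
    ∃ t : ℝ, 0 < t ∧ t • u ∈ P := by
  have hcont : Tendsto (fun t : ℝ => t • u) (𝓝[>] 0) (𝓝 0) :=
    ((show Continuous fun t : ℝ => t • u by fun_prop).tendsto' 0 0 (zero_smul ℝ u)).mono_left
      nhdsWithin_le_nhds
  exact ((hcont.eventually (mem_interior_iff_mem_nhds.1 h0P)).and self_mem_nhdsWithin).exists.imp
    fun t ht => ⟨ht.2, ht.1⟩

lemma exists_pos_add_smul_sub_mem_of_mem_intrinsicInterior {E : Type*} [AddCommGroup E]
    [Module ℝ E] [TopologicalSpace E] [IsTopologicalAddGroup E] [ContinuousSMul ℝ E] {F : Set E}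
    {c x : E} (hc : c ∈ intrinsicInterior ℝ F) (hx : x ∈ F) :
    ∃ t : ℝ, 0 < t ∧ c + t • (c - x) ∈ F := by
  obtain ⟨c₀, hc₀, rfl⟩ := hc
  have hx' : x ∈ affineSpan ℝ F := subset_affineSpan ℝ F hx
  let γ : ℝ → affineSpan ℝ F := fun t =>
    ⟨c₀ + t • ((c₀ : E) - x), by
      simpa [vsub_eq_sub, vadd_eq_add, add_comm] using
        AffineSubspace.smul_vsub_vadd_mem _ t c₀.2 hx' c₀.2⟩
  have hγ : Tendsto γ (𝓝[>] 0) (𝓝 c₀) :=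
    ((Continuous.subtype_mk (by fun_prop) _).tendsto' 0 c₀ (by ext; simp)).mono_left
      nhdsWithin_le_nhds
  obtain ⟨t, ht, htF⟩ := ((hγ.eventually (mem_interior_iff_mem_nhds.1 hc₀)).and
    self_mem_nhdsWithin).exists
  exact ⟨t, htF, ht⟩

end TopologicalVectorSpace

lemma pos_of_forall_inner_le {E : Type*} [NormedAddCommGroup E] [InnerProductSpace ℝ E] {P : Set E}
    (h0P : (0 : E) ∈ interior P) {u : E} (hu : u ≠ 0) {b : ℝ} (hb : ∀ x ∈ P, ⟪x, u⟫ ≤ b) :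
    0 < b := by
  obtain ⟨t, ht, htu⟩ := exists_pos_smul_mem_of_mem_interior h0P u
  have hle := hb _ htu
  rw [real_inner_smul_left, real_inner_self_eq_norm_sq] at hle
  have : 0 < ‖u‖ := norm_pos_iff.2 hu
  exact lt_of_lt_of_le (by positivity) hle

section PolarDuality

variable {n : ℕ}

lemma polarSet_eq_biInter (K : Set (Euc n)) : polarSet K = ⋂ x ∈ K, {y | ⟪x, y⟫ ≤ 1} := by
  ext y
  simp [polarSet]

lemma convex_polarSet (K : Set (Euc n)) : Convex ℝ (polarSet K) := by
  rw [polarSet_eq_biInter]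
  exact convex_iInter₂ fun x _ => convex_halfSpace_le (innerₛₗ ℝ x).isLinear 1

lemma isClosed_polarSet (K : Set (Euc n)) : IsClosed (polarSet K) := by
  rw [polarSet_eq_biInter]
  exact isClosed_biInter fun x _ => isClosed_le (continuous_const.inner continuous_id)
    continuous_const

lemma zero_mem_interior_polarSet {K : Set (Euc n)} (hK : Bornology.IsBounded K) :
    (0 : Euc n) ∈ interior (polarSet K) := by
  obtain ⟨R, hR, hKR⟩ := hK.subset_closedBall_lt 0 0
  refine mem_interior.2 ⟨Metric.ball 0 R⁻¹, fun y hy x hx => ?_, Metric.isOpen_ball,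
    Metric.mem_ball_self (inv_pos.2 hR)⟩
  have hx' : ‖x‖ ≤ R := mem_closedBall_zero_iff.1 (hKR hx)
  have hy' : ‖y‖ < R⁻¹ := mem_ball_zero_iff.1 hy
  calc ⟪x, y⟫ ≤ ‖x‖ * ‖y‖ := real_inner_le_norm x y
    _ ≤ R * R⁻¹ := mul_le_mul hx' hy'.le (norm_nonneg y) hR.le
    _ = 1 := mul_inv_cancel₀ hR.ne'

lemma exists_mem_polarSet_inner_eq_one {K : Set (Euc n)} {S : AffineSubspace ℝ (Euc n)}
    (hK : Convex ℝ K) (h0K : (0 : Euc n) ∈ interior K) (hS : (S : Set (Euc n)).Nonempty)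
    (hdisj : (S : Set (Euc n)) ∩ interior K = ∅) :
    ∃ w ∈ polarSet K, ∀ z ∈ S, ⟪z, w⟫ = 1 := by
  obtain ⟨f, u, hfK, hfS⟩ := geometric_hahn_banach_open hK.interior isOpen_interior S.convex
    (Set.disjoint_iff_inter_eq_empty.2 (by rw [Set.inter_comm, hdisj]))
  have hu : 0 < u := by simpa using hfK 0 h0K
  -- a linear functional bounded below on an affine subspace is constant there
  have hconst : ∀ z ∈ S, ∀ z' ∈ S, f z' = f z := by
    intro z hz z' hz'
    by_contra hne
    have hline := hfS _ (S.smul_vsub_vadd_mem ((u - 1 - f z) / (f z' - f z)) hz' hz hz)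
    rw [vsub_eq_sub, vadd_eq_add, map_add, map_smul, map_sub, smul_eq_mul,
      div_mul_cancel₀ _ (sub_ne_zero.2 hne)] at hline
    linarith
  have hfK' : ∀ k ∈ K, f k ≤ u := by
    have hsub : K ⊆ closure (interior K) := by
      rw [hK.closure_interior_eq_closure_of_nonempty_interior ⟨0, h0K⟩]
      exact subset_closure
    exact fun k hk => closure_minimal (fun y hy => (hfK y hy).le)
      (isClosed_le f.continuous continuous_const) (hsub hk)
  obtain ⟨z₀, hz₀⟩ := hS
  have hv : 0 < f z₀ := hu.trans_le (hfS z₀ hz₀)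
  set w := (f z₀)⁻¹ • (InnerProductSpace.toDual ℝ (Euc n)).symm f
  have hinner : ∀ x, ⟪x, w⟫ = (f z₀)⁻¹ * f x := fun x => by
    rw [real_inner_smul_right, real_inner_comm, InnerProductSpace.toDual_symm_apply]
  refine ⟨w, fun k hk => ?_, fun z hz => ?_⟩
  · rw [hinner, inv_mul_le_one₀ hv]
    exact (hfK' k hk).trans (hfS z₀ hz₀)
  · rw [hinner, hconst z₀ hz₀ z hz, inv_mul_cancel₀ hv.ne']

lemma span_sub_le_orthogonal_span {A B : Set (Euc n)} (h : ∀ x ∈ A, ∀ y ∈ B, ⟪x, y⟫ = 1) :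
    span ℝ (B - B) ≤ (span ℝ A)ᗮ := by
  rw [← Submodule.isOrtho_iff_le, Submodule.isOrtho_span]
  rintro _ ⟨y, hy, y', hy', rfl⟩ x hx
  rw [inner_sub_left, real_inner_comm, h x hx y hy, real_inner_comm, h x hx y' hy', sub_self]

lemma setDim_add_one_le_finrank_span {A : Set (Euc n)} {y : Euc n}
    (hA : ∀ x ∈ A, ⟪x, y⟫ = 1) (hne : A.Nonempty) :
    setDim A + 1 ≤ Module.finrank ℝ (span ℝ A) := by
  obtain ⟨a, ha⟩ := hne
  have hperp : span ℝ (A - A) ≤ (span ℝ {y})ᗮ :=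
    span_sub_le_orthogonal_span fun x hx a ha => by
      rw [mem_singleton_iff.1 hx, real_inner_comm, hA a ha]
  have hlt : span ℝ (A - A) < span ℝ A := by
    refine lt_of_le_of_ne (span_le.2 ?_) fun heq => ?_
    · rintro _ ⟨x, hx, x', hx', rfl⟩
      exact sub_mem (subset_span hx) (subset_span hx')
    · have := mem_orthogonal_singleton_iff_inner_left.1 (hperp (heq ▸ subset_span ha))
      rw [hA a ha] at this
      exact one_ne_zero this
  exact Submodule.finrank_lt_finrank_of_lt hlt

lemma setDim_add_setDim_add_one_le {A B : Set (Euc n)} (h : ∀ x ∈ A, ∀ y ∈ B, ⟪x, y⟫ = 1)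
    {a b : Euc n} (ha : a ∈ A) (hb : b ∈ B) : setDim A + setDim B + 1 ≤ n := by
  have hA := setDim_add_one_le_finrank_span (fun x hx => h x hx b hb) ⟨a, ha⟩
  have hB := Submodule.finrank_mono (span_sub_le_orthogonal_span h)
  have hsum := Submodule.finrank_add_finrank_orthogonal (span ℝ A)
  rw [finrank_euclideanSpace_fin] at hsum
  unfold setDim at *
  omega

lemma mem_of_forall_inner_eq_one {S S' : AffineSubspace ℝ (Euc n)}
    (h : ∀ x ∈ S, ∀ y ∈ S', ⟪x, y⟫ = 1) {a b : Euc n} (ha : a ∈ S) (hb : b ∈ S')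
    (hdim : n ≤ setDim (S : Set (Euc n)) + 1 + setDim (S' : Set (Euc n))) {w : Euc n}
    (hw : ∀ x ∈ S, ⟪x, w⟫ = 1) : w ∈ S' := by
  have hle : S'.direction ≤ (span ℝ (S : Set (Euc n)))ᗮ := span_sub_le_orthogonal_span h
  have hA := setDim_add_one_le_finrank_span (fun x hx => h x hx b hb) ⟨a, ha⟩
  have hsum := Submodule.finrank_add_finrank_orthogonal (span ℝ (S : Set (Euc n)))
  rw [finrank_euclideanSpace_fin] at hsum
  have hS' : setDim (S' : Set (Euc n)) = Module.finrank ℝ S'.direction := rfl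
  have heq : S'.direction = (span ℝ (S : Set (Euc n)))ᗮ :=
    Submodule.eq_of_le_of_finrank_le hle (by omega)
  have hortho : span ℝ {w - b} ⟂ span ℝ (S : Set (Euc n)) :=
    Submodule.isOrtho_span.2 fun v hv x hx => by
      rw [mem_singleton_iff.1 hv, inner_sub_left, real_inner_comm, hw x hx, real_inner_comm,
        h x hx b hb, sub_self]
  have hwb : w - b ∈ S'.direction :=
    heq ▸ Submodule.isOrtho_iff_le.1 hortho (mem_span_singleton_self _)
  simpa using AffineSubspace.vadd_mem_of_mem_direction hwb hb

lemma mem_dualFace {P F : Set (Euc n)} {y : Euc n} :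
    y ∈ dualFace P F ↔ y ∈ polarSet P ∧ ∀ x ∈ F, ⟪x, y⟫ = 1 := by
  simp [dualFace, dualFaceIn, polarIn, polarSet]

lemma dualFace_eq_of_mem_intrinsicInterior {P F : Set (Euc n)} (hFP : F ⊆ P) {c : Euc n}
    (hc : c ∈ intrinsicInterior ℝ F) : dualFace P F = {y ∈ polarSet P | ⟪c, y⟫ = 1} := by
  ext y
  rw [mem_dualFace]
  refine ⟨fun hy => ⟨hy.1, hy.2 c (intrinsicInterior_subset hc)⟩, fun hy => ⟨hy.1, fun x hx => ?_⟩⟩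
  obtain ⟨t, ht, htF⟩ := exists_pos_add_smul_sub_mem_of_mem_intrinsicInterior hc hx
  -- `⟪·, y⟫ ≤ 1` on `P` attains `1` at `c`, an interior point of the segment `[x, c + t (c - x)]`
  have hfar := hy.1 _ (hFP htF)
  rw [inner_add_left, real_inner_smul_left, inner_sub_left, hy.2] at hfar
  have hx1 := hy.1 x (hFP hx)
  nlinarith

lemma isFaceOf_polarSet_dualFace {P F : Set (Euc n)} (h0P : (0 : Euc n) ∈ interior P)
    (hF : IsFaceOf P F) {c : Euc n} (hc : c ∈ intrinsicInterior ℝ F) :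
    IsFaceOf (polarSet P) (dualFace P F) := by
  obtain ⟨u, b, -, hu, hPu, -, rfl, -⟩ := hF
  have hb := pos_of_forall_inner_le h0P hu hPu
  obtain ⟨hcP, hcb⟩ := intrinsicInterior_subset hc
  have hc0 : c ≠ 0 := by
    rintro rfl
    rw [inner_zero_left] at hcb
    exact hb.ne hcb
  have hdual := dualFace_eq_of_mem_intrinsicInterior (fun x hx => hx.1) hc
  refine ⟨c, 1, mem_top, hc0, fun y hy => real_inner_comm c y ▸ hy c hcP, ⟨b⁻¹ • u, ?_, ?_⟩,
    ?_, fun h => ?_⟩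
  · intro x hx
    rw [real_inner_smul_right, inv_mul_le_one₀ hb]
    exact hPu x hx
  · rw [real_inner_smul_left, real_inner_comm, hcb, inv_mul_cancel₀ hb.ne']
  · simp_rw [hdual, real_inner_comm c]
  · have h0 : (0 : Euc n) ∈ polarSet P := fun x _ => by simp
    rw [← h, hdual] at h0
    simp at h0

theorem mul_eq_one_of_tangentXPoint {K : Set (Euc n)} (hK : IsConvexBody K)
    (h0K : (0 : Euc n) ∈ interior K) {S S' : AffineSubspace ℝ (Euc n)}
    (h : ∀ x ∈ S, ∀ y ∈ S', ⟪x, y⟫ = 1)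
    (hdim : n ≤ setDim (S : Set (Euc n)) + 1 + setDim (S' : Set (Euc n)))
    {c c' x x' : Euc n} {t t' : ℝ} (hx : TangentXPoint K S c t x)
    (hx' : TangentXPoint (polarSet K) S' c' t' x') : t * t' = 1 := by
  obtain ⟨ht, hdisj, ⟨⟨a, ha, rfl⟩, hxK⟩, -⟩ := hx
  obtain ⟨ht', hdisj', ⟨⟨a', ha', rfl⟩, hxK'⟩, -⟩ := hx'
  obtain ⟨hKconv, hKcomp, -⟩ := hK
  have hinner : ⟪t • a, t' • a'⟫ = t * t' := by
    rw [real_inner_smul_left, real_inner_smul_right, h a ha a' ha', mul_one]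
  refine le_antisymm (hinner ▸ (isClosed_polarSet K).frontier_subset hxK' _
    (hKcomp.isClosed.frontier_subset hxK)) ?_
  -- a hyperplane through `t • S` supporting `K` is `{⟪·, w⟫ = 1}` with `t • w ∈ S'`
  obtain ⟨w, hwK, hw⟩ := exists_mem_polarSet_inner_eq_one (S := t • S) hKconv h0K
    ⟨t • a, by rw [AffineSubspace.coe_smul]; exact smul_mem_smul_set ha⟩
    (by rwa [AffineSubspace.coe_smul])
  have htw : t • w ∈ S' := mem_of_forall_inner_eq_one h ha ha' hdim fun z hz => by
    rw [real_inner_smul_right, ← real_inner_smul_left]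
    exact hw _ (by rw [← SetLike.mem_coe, AffineSubspace.coe_smul]; exact smul_mem_smul_set hz)
  by_contra! hlt
  have hint : (t' * t) • w ∈ interior (polarSet K) := by
    simpa using (convex_polarSet K).combo_interior_self_mem_interior
      (zero_mem_interior_polarSet hKcomp.isBounded) hwK (a := 1 - t' * t) (b := t' * t)
      (by linarith) (by positivity) (by ring)
  have hmem : (t' * t) • w ∈ t' • (S' : Set (Euc n)) := by
    rw [mul_smul]
    exact smul_mem_smul_set htw
  exact hdisj'.subset ⟨hmem, hint⟩

theorem inner_eq_one_of_tangentPointAt {K : Set (Euc n)} (hK : IsConvexBody K)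
    (h0K : (0 : Euc n) ∈ interior K) {S S' : AffineSubspace ℝ (Euc n)}
    (h : ∀ x ∈ S, ∀ y ∈ S', ⟪x, y⟫ = 1)
    (hdim : n ≤ setDim (S : Set (Euc n)) + 1 + setDim (S' : Set (Euc n)))
    {c c' x x' y y' : Euc n} (hc : c ∈ S) (hc' : c' ∈ S') {t t' : ℝ}
    (hxy : TangentPointAt K S c t x y) (hxy' : TangentPointAt (polarSet K) S' c' t' x' y') :
    ⟪x, x'⟫ = 1 ∧ ⟪y, y'⟫ = 1 := by
  obtain ⟨hx, rfl⟩ := hxy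
  obtain ⟨hx', rfl⟩ := hxy'
  have htt := mul_eq_one_of_tangentXPoint hK h0K h hdim hx hx'
  obtain ⟨-, -, ⟨⟨a, ha, rfl⟩, -⟩, -⟩ := hx
  obtain ⟨-, -, ⟨⟨a', ha', rfl⟩, -⟩, -⟩ := hx'
  constructor <;>
  · rw [real_inner_smul_left, real_inner_smul_right, h _ ‹_› _ ‹_›, mul_one, htt]

end PolarDuality

namespace PointedCone

section Module

variable {E : Type*} [AddCommGroup E] [Module ℝ E]

lemma exists_mem_hull_erase_of_not_linearIndepOn {s : Finset E}
    (hs : ¬LinearIndepOn ℝ id (s : Set E)) {x : E} (hx : x ∈ hull ℝ (s : Set E)) :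
    ∃ g ∈ s, x ∈ hull ℝ ((s.erase g : Finset E) : Set E) := by
  obtain ⟨d, hd, g₀, hg₀, hdg₀⟩ : ∃ d : E → ℝ, ∑ g ∈ s, d g • g = 0 ∧ ∃ g₀ ∈ s, 0 < d g₀ := by
    simp only [linearIndepOn_finset_iff, id, not_forall] at hs
    obtain ⟨d, hd, g₀, hg₀, hne⟩ := hs
    rcases lt_or_gt_of_ne hne with hneg | hpos
    · exact ⟨-d, by simp [neg_smul, Finset.sum_neg_distrib, hd], g₀, hg₀, by simpa using hneg⟩
    · exact ⟨d, hd, g₀, hg₀, hpos⟩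
  obtain ⟨f, -, rfl⟩ := Submodule.mem_span_finset.1 hx
  -- subtract the largest multiple `t • d` of the relation that keeps all coefficients `≥ 0`
  obtain ⟨g, hg, hmin⟩ := (s.filter (0 < d ·)).exists_min_image (fun g => (f g : ℝ) / d g)
    ⟨g₀, Finset.mem_filter.2 ⟨hg₀, hdg₀⟩⟩
  obtain ⟨hgs, hdg⟩ := Finset.mem_filter.1 hg
  set t := (f g : ℝ) / d g
  have ht : 0 ≤ t := div_nonneg (f g).2 hdg.le
  have hcoeff : ∀ g' ∈ s, 0 ≤ (f g' : ℝ) - t * d g' := by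
    intro g' hg'
    rcases le_or_gt (d g') 0 with hle | hlt
    · nlinarith [(f g').2]
    · have := hmin g' (Finset.mem_filter.2 ⟨hg', hlt⟩)
      rw [le_div_iff₀ hlt] at this
      linarith
  have hsum : ∑ g' ∈ s, f g' • g' = ∑ g' ∈ s, ((f g' : ℝ) - t * d g') • g' := by
    simp only [sub_smul, mul_smul, Finset.sum_sub_distrib, ← Finset.smul_sum, hd, smul_zero,
      sub_zero, Nonneg.coe_smul]
  refine ⟨g, hgs, ?_⟩
  rw [hsum, ← Finset.sum_erase s (by rw [div_mul_cancel₀ _ hdg.ne', sub_self, zero_smul])]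
  exact Submodule.sum_mem _ fun g' hg' => smul_mem _ (hcoeff g' (Finset.mem_of_mem_erase hg'))
    (Submodule.subset_span hg')

end Module

variable {E : Type*} [AddCommGroup E] [Module ℝ E] [TopologicalSpace E] [IsTopologicalAddGroup E]
  [ContinuousSMul ℝ E] [T2Space E]

lemma isClosed_hull_of_linearIndepOn {s : Finset E} (hs : LinearIndepOn ℝ id (s : Set E)) :
    IsClosed (hull ℝ (s : Set E) : Set E) := by
  set f := Fintype.linearCombination ℝ ((↑) : s → E)
  have hf : LinearMap.ker f = ⊥ :=
    LinearMap.ker_eq_bot.2 hs.fintypeLinearCombination_injective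
  have himage : (hull ℝ (s : Set E) : Set E) = f '' Ici 0 := by
    ext x
    simp only [SetLike.mem_coe, Submodule.mem_span_finset', mem_image, mem_Ici,
      f, Fintype.linearCombination_apply]
    constructor
    · rintro ⟨ν, rfl⟩
      exact ⟨fun g => ν g, fun g => (ν g).2, by simp⟩
    · rintro ⟨ν, hν, rfl⟩
      exact ⟨fun g => ⟨ν g, hν g⟩, by simp⟩
  rw [himage]
  exact (LinearMap.isClosedEmbedding_of_injective hf).isClosedMap _ isClosed_Ici

theorem isClosed_hull_finset (s : Finset E) : IsClosed (hull ℝ (s : Set E) : Set E) := by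
  induction s using Finset.strongInduction with
  | H s ih =>
    by_cases hs : LinearIndepOn ℝ id (s : Set E)
    · exact isClosed_hull_of_linearIndepOn hs
    have hcover : (hull ℝ (s : Set E) : Set E) =
        ⋃ g ∈ s, hull ℝ ((s.erase g : Finset E) : Set E) := by
      refine Subset.antisymm (fun x hx => ?_) (iUnion₂_subset fun g _ => ?_)
      · obtain ⟨g, hg, hxg⟩ := exists_mem_hull_erase_of_not_linearIndepOn hs hx
        exact mem_iUnion₂.2 ⟨g, hg, hxg⟩
      · exact Submodule.span_mono (by simp)
    rw [hcover]
    exact isClosed_biUnion_finset fun g hg => ih _ (Finset.erase_ssubset hg)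

end PointedCone

section TangentCone

variable {E : Type*} [AddCommGroup E] [Module ℝ E]

lemma sub_mem_hull_image_sub {s : Set E} {c p : E} (hp : p ∈ convexHull ℝ s) :
    p - c ∈ PointedCone.hull ℝ ((· - c) '' s) := by
  have hsub : convexHull ℝ s ⊆ (fun x => -c + x) ⁻¹' PointedCone.hull ℝ ((· - c) '' s) :=
    convexHull_min (fun x hx => by
      simpa [neg_add_eq_sub] using PointedCone.subset_hull (R := ℝ) (mem_image_of_mem (· - c) hx))
      ((PointedCone.convex _).translate_preimage_right (-c))
  simpa [neg_add_eq_sub] using hsub hp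

lemma exists_pos_add_smul_mem_of_mem_hull {P s : Set E} (hP : Convex ℝ P) (hs : s ⊆ P) {c v : E}
    (hc : c ∈ P) (hv : v ∈ PointedCone.hull ℝ ((· - c) '' s)) :
    ∃ ε : ℝ, 0 < ε ∧ c + ε • v ∈ P := by
  induction hv using Submodule.span_induction with
  | mem v hv =>
    obtain ⟨x, hx, rfl⟩ := hv
    exact ⟨1, one_pos, by simpa using hs hx⟩
  | zero => exact ⟨1, one_pos, by simpa using hc⟩
  | add v v' _ _ hv hv' =>
    obtain ⟨ε, hε, hεv⟩ := hv
    obtain ⟨ε', hε', hεv'⟩ := hv'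
    refine ⟨ε * ε' / (ε + ε'), by positivity, ?_⟩
    convert hP hεv hεv' (a := ε' / (ε + ε')) (b := ε / (ε + ε')) (by positivity) (by positivity)
      (by field_simp; ring) using 1
    match_scalars <;> field_simp; ring
  | smul r v _ hv =>
    obtain ⟨ε, hε, hεv⟩ := hv
    rcases eq_or_lt_of_le r.2 with hr | hr
    · exact ⟨1, one_pos, by simpa [← Nonneg.coe_smul, ← hr] using hc⟩
    · refine ⟨ε / r, div_pos hε hr, ?_⟩
      rwa [← Nonneg.coe_smul, smul_smul, div_mul_cancel₀ _ hr.ne']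

end TangentCone

section Transversality

open Metric

lemma exists_pos_mul_norm_le_infDist {E : Type*} [NormedAddCommGroup E] [NormedSpace ℝ E]
    [ProperSpace E] {C : PointedCone ℝ E} {L : Set E} (hC : IsClosed (C : Set E))
    (hL : IsClosed L) (hLsmul : ∀ v ∈ L, ∀ r : ℝ, 0 < r → r • v ∈ L)
    (hCL : ∀ v ∈ L, v ∈ C → v = 0) : ∃ κ > 0, ∀ v ∈ L, κ * ‖v‖ ≤ infDist v C := by
  have hunit : ∀ v ∈ L, v ≠ 0 → ‖v‖⁻¹ • v ∈ L ∩ sphere 0 1 := fun v hv hv0 =>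
    ⟨hLsmul v hv _ (inv_pos.2 (norm_pos_iff.2 hv0)), by simp [norm_smul, hv0]⟩
  rcases (L ∩ sphere (0 : E) 1).eq_empty_or_nonempty with hempty | hne
  · refine ⟨1, one_pos, fun v hv => ?_⟩
    obtain rfl : v = 0 := by_contra fun hv0 => by simpa [hempty] using hunit v hv hv0
    simpa using infDist_nonneg
  obtain ⟨v₀, hv₀, hmin⟩ := ((isCompact_sphere 0 1).inter_left hL).exists_isMinOn hne
    (continuous_infDist_pt _).continuousOn
  refine ⟨infDist v₀ C, ?_, fun v hv => ?_⟩
  · refine (hC.notMem_iff_infDist_pos ⟨0, C.zero_mem⟩).1 fun hv₀C => ?_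
    have := hv₀.2
    simp [hCL v₀ hv₀.1 hv₀C] at this
  rcases eq_or_ne v 0 with rfl | hv0
  · simpa using infDist_nonneg
  rw [le_infDist ⟨0, C.zero_mem⟩]
  intro y hy
  have hnorm : 0 < ‖v‖ := norm_pos_iff.2 hv0
  have hle : infDist v₀ C ≤ dist (‖v‖⁻¹ • v) (‖v‖⁻¹ • y) :=
    (hmin (hunit v hv hv0)).trans (infDist_le_dist_of_mem (C.smul_mem (by positivity) hy))
  rw [dist_smul₀, norm_inv, norm_norm] at hle
  calc infDist v₀ C * ‖v‖ ≤ ‖v‖⁻¹ * dist v y * ‖v‖ := by gcongr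
    _ = dist v y := by field_simp

variable {E : Type*} [NormedAddCommGroup E] [InnerProductSpace ℝ E]

lemma eq_zero_of_add_smul_add_smul_mem {P : Set E} (hP : Convex ℝ P) (h0 : (0 : E) ∈ P)
    {S : AffineSubspace ℝ E} {c u : E} {b : ℝ} (hS : (S : Set E) ∩ P = {c})
    (hsup : ∀ x ∈ P, ⟪x, u⟫ ≤ b) (hcb : ⟪c, u⟫ = b) (hb : 0 < b) {w : E} (hw : w ∈ S.direction)
    {r ε : ℝ} (hr : 0 ≤ r) (hε : 0 < ε) (hmem : c + ε • (w + r • c) ∈ P) : w + r • c = 0 := by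
  have hcS : c ∈ S := (hS.symm.subset rfl).1
  have hscale : 0 < 1 + ε * r := by positivity
  have hsplit : c + ε • (w + r • c) = (1 + ε * r) • c + ε • w := by module
  -- shrinking towards `0 ∈ P` lands on `S ∩ P = {c}`
  have hq : (1 + ε * r)⁻¹ • (c + ε • (w + r • c)) ∈ (S : Set E) ∩ P := by
    refine ⟨?_, hP.smul_mem_of_zero_mem h0 hmem
      ⟨by positivity, inv_le_one_of_one_le₀ (by nlinarith)⟩⟩
    have hq' : (1 + ε * r)⁻¹ • (c + ε • (w + r • c)) = ((1 + ε * r)⁻¹ * ε) • w +ᵥ c := by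
      rw [hsplit, vadd_eq_add, smul_add, smul_smul, inv_mul_cancel₀ hscale.ne', one_smul,
        smul_smul, add_comm]
    rw [hq']
    exact AffineSubspace.vadd_mem_of_mem_direction (S.direction.smul_mem _ hw) hcS
  rw [hS, mem_singleton_iff, hsplit, smul_add, smul_smul, inv_mul_cancel₀ hscale.ne', one_smul,
    add_eq_left, smul_smul, smul_eq_zero] at hq
  obtain rfl : w = 0 := hq.resolve_left (by positivity)
  have hcu := hsup _ hmem
  rw [hsplit, smul_zero, add_zero, real_inner_smul_left, hcb] at hcu
  obtain rfl : r = 0 := le_antisymm (by nlinarith [mul_pos hε hb]) hr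
  simp

theorem smul_subset_of_hausdorffDist_le [CompleteSpace E] {K P : Set E} (hK : Convex ℝ K)
    (hKc : IsCompact K) (hKne : K.Nonempty) (hP : Convex ℝ P) (hPb : Bornology.IsBounded P)
    {r : ℝ} (hr : 0 < r)
    (hball : closedBall 0 r ⊆ P) (hδ : hausdorffDist K P ≤ r) :
    (1 - hausdorffDist K P / r) • P ⊆ K := by
  set δ := hausdorffDist K P
  rintro _ ⟨p, hp, rfl⟩
  by_contra hq
  obtain ⟨f, s, hfK, hfq⟩ := geometric_hahn_banach_closed_point hK hKc.isClosed hq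
  set w := (InnerProductSpace.toDual ℝ E).symm f
  have hf : ∀ x, f x = ⟪w, x⟫ := fun x => InnerProductSpace.toDual_symm_apply.symm
  have hw : 0 < ‖w‖ := by
    refine norm_pos_iff.2 fun h => ?_
    obtain ⟨k, hk⟩ := hKne
    have := hfK k hk
    simp only [hf, h, inner_zero_left] at this hfq
    linarith
  -- `m = (1 - δ / r) • p + δ • (w / ‖w‖) ∈ P`, and a point `k ∈ K` within `δ` of `m` has
  -- `f k ≥ f ((1 - δ / r) • p)`, contradicting the separation
  set m := (1 - δ / r) • p + (δ / r) • (r • ‖w‖⁻¹ • w)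
  have hm : m ∈ P := by
    refine hP hp (hball ?_) (by rw [sub_nonneg, div_le_one hr]; exact hδ)
      (div_nonneg hausdorffDist_nonneg hr.le) (by ring)
    rw [mem_closedBall_zero_iff, norm_smul, norm_smul, norm_inv, norm_norm,
      Real.norm_of_nonneg hr.le, inv_mul_cancel₀ hw.ne', mul_one]
  have hfm : f m = f ((1 - δ / r) • p) + δ * ‖w‖ := by
    rw [map_add, hf ((δ / r) • _), real_inner_smul_right, real_inner_smul_right,
      real_inner_smul_right, real_inner_self_eq_norm_sq]
    field_simp
  obtain ⟨k, hk, hmk⟩ : ∃ k ∈ K, dist m k ≤ δ := by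
    obtain ⟨k, hk, hd⟩ := hKc.exists_infDist_eq_dist hKne m
    refine ⟨k, hk, hd ▸ (infDist_le_hausdorffDist_of_mem hm ?_).trans_eq hausdorffDist_comm⟩
    exact hausdorffEDist_ne_top_of_nonempty_of_bounded ⟨p, hp⟩ hKne hPb hKc.isBounded
  have hfmk : f m - f k ≤ ‖w‖ * δ := by
    rw [← map_sub, hf]
    exact (real_inner_le_norm w _).trans
      (mul_le_mul_of_nonneg_left (dist_eq_norm m k ▸ hmk) hw.le)
  linarith [hfK k hk]

theorem one_sub_hausdorffDist_div_le [CompleteSpace E] {K P A : Set E} (hK : Convex ℝ K)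
    (hKc : IsCompact K) (h0K : (0 : E) ∈ interior K) (hP : Convex ℝ P)
    (hPb : Bornology.IsBounded P) {r : ℝ} (hr : 0 < r) (hball : closedBall 0 r ⊆ P)
    (hδ : hausdorffDist K P ≤ r) {c : E} (hcA : c ∈ A) (hcP : c ∈ P) {t : ℝ} (ht : 0 < t)
    (hdisj : t • A ∩ interior K = ∅) : 1 - hausdorffDist K P / r ≤ t := by
  set δ := hausdorffDist K P
  by_contra! hlt
  have hpos : 0 < 1 - δ / r := ht.trans hlt
  -- otherwise `t • c` lies strictly between `0` and `(1 - δ / r) • c ∈ K`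
  have hshrink := smul_subset_of_hausdorffDist_le hK hKc ⟨0, interior_subset h0K⟩ hP hPb hr
    hball hδ (smul_mem_smul_set (a := 1 - δ / r) hcP)
  have hint := hK.combo_interior_self_mem_interior h0K hshrink
    (a := 1 - t / (1 - δ / r)) (b := t / (1 - δ / r))
    (by rw [sub_pos, div_lt_one hpos]; exact hlt) (by positivity) (by ring)
  rw [smul_zero, zero_add, smul_smul, div_mul_cancel₀ _ hpos.ne'] at hint
  exact hdisj.subset ⟨smul_mem_smul_set hcA, hint⟩

variable [FiniteDimensional ℝ E]

lemma exists_inner_eq_one_of_notMem {W : Submodule ℝ E} {c : E} (hc : c ∉ W) :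
    ∃ e : E, (∀ w ∈ W, ⟪w, e⟫ = 0) ∧ ⟪c, e⟫ = 1 := by
  set c' := c - W.starProjection c
  have hc' : c' ∈ Wᗮ := W.sub_starProjection_mem_orthogonal c
  have hc'0 : c' ≠ 0 := fun h => hc (sub_eq_zero.1 h ▸ W.starProjection_apply_mem c)
  have hcc' : ⟪c, c'⟫ = ‖c'‖ ^ 2 := by
    rw [← real_inner_self_eq_norm_sq]
    nth_rw 1 [← sub_add_cancel c (W.starProjection c)]
    rw [inner_add_left, Submodule.inner_right_of_mem_orthogonal (W.starProjection_apply_mem c) hc',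
      add_zero]
  refine ⟨(‖c'‖ ^ 2)⁻¹ • c', fun w hw => ?_, ?_⟩
  · rw [real_inner_smul_right, Submodule.inner_right_of_mem_orthogonal hw hc', mul_zero]
  · rw [real_inner_smul_right, hcc', inv_mul_cancel₀ (by positivity)]

lemma exists_pos_mul_le_infDist_of_notMem {C : PointedCone ℝ E} (hC : IsClosed (C : Set E))
    {W : Submodule ℝ E} {c : E} (hc : c ∉ W)
    (hWC : ∀ w ∈ W, ∀ r : ℝ, 0 ≤ r → w + r • c ∈ C → w + r • c = 0) :
    ∃ κ > 0, ∀ w ∈ W, ∀ r : ℝ, 0 ≤ r → κ * (‖w + r • c‖ + ‖r • c‖) ≤ infDist (w + r • c) C := by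
  obtain ⟨e, heW, hce⟩ := exists_inner_eq_one_of_notMem hc
  -- `L = W + ℝ≥0 • c`, cut out of `W + ℝ • c` by the functional `⟪·, e⟫`
  set L := {v : E | 0 ≤ ⟪v, e⟫ ∧ v - ⟪v, e⟫ • c ∈ W}
  have hL : IsClosed L :=
    (isClosed_le continuous_const (by fun_prop : Continuous fun v : E => ⟪v, e⟫)).inter
      (W.closed_of_finiteDimensional.preimage
        (by fun_prop : Continuous fun v : E => v - ⟪v, e⟫ • c))
  have hLsmul : ∀ v ∈ L, ∀ r : ℝ, 0 < r → r • v ∈ L := fun v hv r hr => by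
    refine ⟨by rw [real_inner_smul_left]; exact mul_nonneg hr.le hv.1, ?_⟩
    rw [real_inner_smul_left, mul_smul, ← smul_sub]
    exact W.smul_mem r hv.2
  have hCL : ∀ v ∈ L, v ∈ C → v = 0 := fun v hv hvC => by
    have := hWC _ hv.2 _ hv.1 (by rwa [sub_add_cancel])
    rwa [sub_add_cancel] at this
  obtain ⟨κ, hκ, hκL⟩ := exists_pos_mul_norm_le_infDist hC hL hLsmul hCL
  refine ⟨κ / (1 + ‖e‖ * ‖c‖), by positivity, fun w hw r hr => ?_⟩
  set v := w + r • c
  have hve : ⟪v, e⟫ = r := by rw [inner_add_left, heW w hw, real_inner_smul_left, hce]; ring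
  have hrc : ‖r • c‖ ≤ ‖v‖ * (‖e‖ * ‖c‖) := by
    rw [norm_smul, Real.norm_of_nonneg hr, ← mul_assoc, ← hve]
    exact mul_le_mul_of_nonneg_right (real_inner_le_norm v e) (norm_nonneg c)
  calc κ / (1 + ‖e‖ * ‖c‖) * (‖v‖ + ‖r • c‖)
      ≤ κ / (1 + ‖e‖ * ‖c‖) * (‖v‖ * (1 + ‖e‖ * ‖c‖)) := by gcongr; linarith
    _ = κ * ‖v‖ := by field_simp
    _ ≤ infDist v C := hκL v ⟨hve ▸ hr, by rwa [hve, add_sub_cancel_right]⟩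

theorem exists_pos_mul_le_infDist_convexHull {s : Finset E} {S : AffineSubspace ℝ E}
    {c u : E} {b : ℝ} (hS : (S : Set E) ∩ convexHull ℝ (s : Set E) = {c})
    (h0 : (0 : E) ∈ convexHull ℝ (s : Set E)) (hsup : ∀ x ∈ convexHull ℝ (s : Set E), ⟪x, u⟫ ≤ b)
    (hcb : ⟪c, u⟫ = b) (hb : 0 < b) :
    ∃ κ > 0, ∀ w ∈ S.direction, ∀ r : ℝ, 0 ≤ r →
      κ * (‖w + r • c‖ + ‖r • c‖) ≤ infDist (c + (w + r • c)) (convexHull ℝ (s : Set E)) := by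
  set P := convexHull ℝ (s : Set E)
  obtain ⟨hcS, hcP⟩ : c ∈ (S : Set E) ∩ P := hS.symm.subset rfl
  set C := PointedCone.hull ℝ ((· - c) '' (s : Set E))
  have hC : IsClosed (C : Set E) := by
    simpa only [C, ← Finset.coe_image] using PointedCone.isClosed_hull_finset (s.image (· - c))
  have hcW : c ∉ S.direction := fun hc => by
    have h0S : (0 : E) ∈ S := by
      simpa using AffineSubspace.vadd_mem_of_mem_direction (neg_mem hc) hcS
    obtain rfl : (0 : E) = c := hS.subset ⟨h0S, h0⟩
    simp [← hcb] at hb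
  obtain ⟨κ, hκ, hκC⟩ := exists_pos_mul_le_infDist_of_notMem hC hcW fun w hw r hr hC => by
    obtain ⟨ε, hε, hεv⟩ := exists_pos_add_smul_mem_of_mem_hull (convex_convexHull ℝ _)
      (subset_convexHull ℝ _) hcP hC
    exact eq_zero_of_add_smul_add_smul_mem (convex_convexHull ℝ _) h0 hS hsup hcb hb hw hr hε hεv
  refine ⟨κ, hκ, fun w hw r hr => (hκC w hw r hr).trans ?_⟩
  exact (le_infDist ⟨0, h0⟩).2 fun p hp =>
    (infDist_le_dist_of_mem (sub_mem_hull_image_sub hp)).trans_eq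
      (by rw [dist_eq_norm, dist_eq_norm]; congr 1; abel)

end Transversality

section Stability

open Metric

variable {n : ℕ}

theorem exists_tangentXPoint_stability {P : Set (Euc n)} {s : Finset (Euc n)}
    (hPs : P = convexHull ℝ (s : Set (Euc n))) (h0P : (0 : Euc n) ∈ interior P)
    {S : AffineSubspace ℝ (Euc n)} {c u : Euc n} {b : ℝ} (hS : (S : Set (Euc n)) ∩ P = {c})
    (hu : u ≠ 0) (hsup : ∀ x ∈ P, ⟪x, u⟫ ≤ b) (hcb : ⟪c, u⟫ = b) :
    ∃ C δ₀ : ℝ, 0 < C ∧ 0 < δ₀ ∧ ∀ K : Set (Euc n), IsConvexBody K →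
      (0 : Euc n) ∈ interior K → ∀ (t : ℝ) (x : Euc n), TangentXPoint K S c t x →
        hausdorffDist K P ≤ δ₀ →
        ‖x - c‖ ≤ C * hausdorffDist K P ∧ ‖t • c - c‖ ≤ C * hausdorffDist K P := by
  subst hPs
  set P := convexHull ℝ (s : Set (Euc n))
  obtain ⟨hcS, hcP⟩ : c ∈ (S : Set (Euc n)) ∩ P := hS.symm.subset rfl
  obtain ⟨κ, hκ, hκS⟩ := exists_pos_mul_le_infDist_convexHull hS (interior_subset h0P) hsup hcb
    (pos_of_forall_inner_le h0P hu hsup)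
  obtain ⟨r, hr, hball⟩ := nhds_basis_closedBall.mem_iff.1 (mem_interior_iff_mem_nhds.1 h0P)
  have hPcomp : IsCompact P := s.finite_toSet.isCompact_convexHull (𝕜 := ℝ)
  refine ⟨(1 + ‖c‖ / r) / κ + ‖c‖ / r, r, by positivity, hr, ?_⟩
  rintro K ⟨hKconv, hKcomp, -⟩ h0K t _ ⟨ht, hdisj, ⟨⟨a, ha, rfl⟩, hxK⟩, -⟩ hδ
  set δ := hausdorffDist K P
  have hδ0 : 0 ≤ δ := hausdorffDist_nonneg
  have ht_low : 1 - δ / r ≤ t := one_sub_hausdorffDist_div_le hKconv hKcomp h0K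
    (convex_convexHull ℝ _) hPcomp.isBounded hr hball hδ hcS hcP ht hdisj
  have hxP : infDist (t • a) P ≤ δ :=
    infDist_le_hausdorffDist_of_mem (hKcomp.isClosed.frontier_subset hxK)
      (hausdorffEDist_ne_top_of_nonempty_of_bounded ⟨0, interior_subset h0K⟩ ⟨c, hcP⟩
        hKcomp.isBounded hPcomp.isBounded)
  -- `t • a - c = w + (t - 1) • c`; moving by `σ • c` with `σ = max (1 - t) 0` brings it into the
  -- half-space `S.direction + ℝ≥0 • c`
  set w := t • (a - c)
  have hw : w ∈ S.direction :=
    S.direction.smul_mem t (AffineSubspace.vsub_mem_direction ha hcS)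
  set σ := max (1 - t) 0
  have hσ : 0 ≤ σ ∧ σ ≤ δ / r :=
    ⟨le_max_right _ _, max_le (by linarith) (div_nonneg hδ0 hr.le)⟩
  have hκz := hκS w hw (t - 1 + σ) (by linarith [le_max_left (1 - t) 0])
  have hxz : t • a - c + σ • c = w + (t - 1 + σ) • c := by simp only [w]; module
  have hσc : ‖σ • c‖ ≤ ‖c‖ / r * δ := by
    rw [norm_smul, Real.norm_of_nonneg hσ.1, div_mul_comm]
    exact mul_le_mul_of_nonneg_right hσ.2 (norm_nonneg c)
  have hdist : infDist (c + (w + (t - 1 + σ) • c)) P ≤ δ + ‖σ • c‖ := by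
    refine (infDist_le_infDist_add_dist).trans (add_le_add hxP (le_of_eq ?_))
    rw [dist_eq_norm, ← hxz, show c + (t • a - c + σ • c) - t • a = σ • c by abel]
  have hsum : ‖w + (t - 1 + σ) • c‖ + ‖(t - 1 + σ) • c‖ ≤ (1 + ‖c‖ / r) / κ * δ := by
    rw [div_mul_eq_mul_div, le_div_iff₀ hκ]
    linarith
  constructor
  · calc ‖t • a - c‖ = ‖w + (t - 1 + σ) • c - σ • c‖ := by rw [← hxz, add_sub_cancel_right]
      _ ≤ ‖w + (t - 1 + σ) • c‖ + ‖σ • c‖ := norm_sub_le _ _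
      _ ≤ ((1 + ‖c‖ / r) / κ + ‖c‖ / r) * δ := by linarith [norm_nonneg ((t - 1 + σ) • c)]
  · calc ‖t • c - c‖ = ‖(t - 1 + σ) • c - σ • c‖ := by congr 1; module
      _ ≤ ‖(t - 1 + σ) • c‖ + ‖σ • c‖ := norm_sub_le _ _
      _ ≤ ((1 + ‖c‖ / r) / κ + ‖c‖ / r) * δ := by linarith [norm_nonneg (w + (t - 1 + σ) • c)]

end Stability

/-- **Proposition 2.2.** For a polytope `P` with a family of affine subspaces satisfying
(a), (b), (c), and a convex body `K` with `0 ∈ int(P ∩ K)`, the tangent points satisfy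
`⟨x_F, x_{F*}⟩ = ⟨y_F, y_{F*}⟩ = 1`; moreover, for each face `F` there are constants
`C, δ₀ > 0` depending only on `P`, `F`, `A_F` such that if `d_H(K,P) ≤ δ₀` then
`|x_F − c_F| ≤ C·d_H(K,P)` and `|y_F − c_F| ≤ C·d_H(K,P)`. -/
theorem tangent_points_duality_and_stability (n : ℕ) (P : Set (Euc n)) (hP : IsPolytope P)
    (h0P : (0 : Euc n) ∈ interior P)
    (A : Set (Euc n) → Set (Euc n)) (c : Set (Euc n) → Euc n) (hA : GoodFamily P A c)
    (F : Set (Euc n)) (hF : IsFaceOf P F) :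
    (∀ K : Set (Euc n), IsConvexBody K → (0 : Euc n) ∈ interior (P ∩ K) →
      ∀ (t : Set (Euc n) → ℝ) (x y : Set (Euc n) → Euc n),
        (∀ G, IsFaceOf P G → TangentPointAt K (A G) (c G) (t G) (x G) (y G)) →
        (∀ G, IsFaceOf (polarSet P) G →
          TangentPointAt (polarSet K) (A G) (c G) (t G) (x G) (y G)) →
        ⟪x F, x (dualFace P F)⟫ = 1 ∧ ⟪y F, y (dualFace P F)⟫ = 1) ∧
    ∃ C δ₀ : ℝ, 0 < C ∧ 0 < δ₀ ∧
      ∀ K : Set (Euc n), IsConvexBody K → (0 : Euc n) ∈ interior (P ∩ K) →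
        ∀ (t : Set (Euc n) → ℝ) (x y : Set (Euc n) → Euc n),
          (∀ G, IsFaceOf P G → TangentPointAt K (A G) (c G) (t G) (x G) (y G)) →
          Metric.hausdorffDist K P ≤ δ₀ →
          ‖x F - c F‖ ≤ C * Metric.hausdorffDist K P ∧
          ‖y F - c F‖ ≤ C * Metric.hausdorffDist K P := by
  obtain ⟨⟨⟨S, hS⟩, hSP, hcF, hdimF⟩, hSS'⟩ := hA.1 F hF
  have hF' := isFaceOf_polarSet_dualFace h0P hF hcF
  obtain ⟨⟨S', hS'⟩, hSP', hcF', hdimF'⟩ := hA.2 _ hF'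
  rw [hS] at hSP hdimF hSS'
  rw [hS'] at hSP' hdimF' hSS'
  refine ⟨fun K hK h0K t x y hx hy => ?_, ?_⟩
  · have hdim := setDim_add_setDim_add_one_le (fun x hx y hy => (mem_dualFace.1 hy).2 x hx)
      (intrinsicInterior_subset hcF) (intrinsicInterior_subset hcF')
    exact inner_eq_one_of_tangentPointAt hK (interior_mono inter_subset_right h0K) hSS' (by omega)
      (hSP.symm.subset rfl).1 (hSP'.symm.subset rfl).1 (hS ▸ hx F hF) (hS' ▸ hy _ hF')
  · obtain ⟨s, hPs⟩ := hP
    have ⟨u, b, _, hu, hsup, _, hFeq, _⟩ := hF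
    have hcb : ⟪c F, u⟫ = b := (hFeq.le (intrinsicInterior_subset hcF)).2
    obtain ⟨C, δ₀, hC, hδ₀, hstab⟩ := exists_tangentXPoint_stability hPs h0P hSP hu hsup hcb
    refine ⟨C, δ₀, hC, hδ₀, fun K hK h0K t x y hx hδ => ?_⟩
    obtain ⟨hxF, hyF⟩ := hS ▸ hx F hF
    rw [hyF]
    exact hstab K hK (interior_mono inter_subset_right h0K) (t F) (x F) hxF hδ
end

section
/- Let A ⊂ ℝ^{n₁} and B ⊂ ℝ^{n₂} be nonempty convex sets, where ℝⁿ = ℝ^{n₁} ⊕ ℝ^{n₂}. Then dim(A ⊕∞ B) = dim A + dim B. If moreover aff(A) ∩ aff(B) = ∅ (equivalently, at least one of aff(A), aff(B) does not contain the origin), then dim(A ⊕₁ B) = dim A + dim B + 1; and this second formula also holds when one of the summands is the empty set, under the convention dim(∅) = −1. -/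
open MeasureTheory Set Submodule
open scoped RealInnerProductSpace Pointwise Classical

lemma span_sub_eq {n : ℕ} (S : Set (Euc n)) :
    Submodule.span ℝ (S - S) = vectorSpan ℝ S := by
  rw [vectorSpan_def]
  congr 1

lemma setDim_eq_vs {n : ℕ} (S : Set (Euc n)) :
    setDim S = Module.finrank ℝ (vectorSpan ℝ S) :=
  congrArg (fun W : Submodule ℝ (Euc n) => Module.finrank ℝ W) (span_sub_eq S)

lemma finrank_sup_of_inf_bot {n : ℕ} (W₁ W₂ : Submodule ℝ (Euc n)) (h : W₁ ⊓ W₂ = ⊥) :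
    Module.finrank ℝ (W₁ ⊔ W₂ : Submodule ℝ (Euc n)) =
      Module.finrank ℝ W₁ + Module.finrank ℝ W₂ := by
  have := Submodule.finrank_sup_add_finrank_inf_eq W₁ W₂
  rw [h, finrank_bot] at this; omega

/-- **Lemma 3.1.** For nonempty convex sets `A ⊂ ℝ^{n₁}`, `B ⊂ ℝ^{n₂}` (complementary
subspaces of `ℝⁿ`), `dim(A ⊕∞ B) = dim A + dim B`; if moreover
`aff(A) ∩ aff(B) = ∅` then `dim(A ⊕₁ B) = dim A + dim B + 1`; the latter formula also
holds when one summand is empty, with the convention `dim ∅ = −1`. -/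
theorem dim_of_sums (n : ℕ) (V : Submodule ℝ (Euc n)) (A B : Set (Euc n))
    (hA : A.Nonempty) (hB : B.Nonempty) (hAc : Convex ℝ A) (hBc : Convex ℝ B)
    (hAV : A ⊆ (V : Set (Euc n))) (hBV : B ⊆ ((Vᗮ : Submodule ℝ (Euc n)) : Set (Euc n))) :
    setDim (A + B) = setDim A + setDim B ∧
    (((affineSpan ℝ A : Set (Euc n)) ∩ (affineSpan ℝ B : Set (Euc n)) = ∅) →
      setDim (convexHull ℝ (A ∪ B)) = setDim A + setDim B + 1) ∧
    (edim (l1Sum A ∅) = edim A + edim (∅ : Set (Euc n)) + 1 ∧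
     edim (l1Sum ∅ B) = edim (∅ : Set (Euc n)) + edim B + 1) := by
  obtain ⟨a₀, ha₀⟩ := hA
  obtain ⟨b₀, hb₀⟩ := hB
  set WA : Submodule ℝ (Euc n) := Submodule.span ℝ (A - A) with hWA
  set WB : Submodule ℝ (Euc n) := Submodule.span ℝ (B - B) with hWB
  have hWAV : WA ≤ V := by
    rw [hWA, Submodule.span_le]
    rintro x ⟨a, ha, a', ha', rfl⟩
    exact sub_mem (hAV ha) (hAV ha')
  have hWBV : WB ≤ Vᗮ := by
    rw [hWB, Submodule.span_le]
    rintro x ⟨b, hb, b', hb', rfl⟩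
    exact sub_mem (hBV hb) (hBV hb')
  have hinf : WA ⊓ WB = ⊥ :=
    le_bot_iff.mp (le_trans (inf_le_inf hWAV hWBV) (le_of_eq (Submodule.inf_orthogonal_eq_bot V)))
  have hsubA : A - A ⊆ (A + B) - (A + B) := by
    rintro x ⟨a, ha, a', ha', rfl⟩
    exact ⟨a + b₀, Set.add_mem_add ha hb₀, a' + b₀, Set.add_mem_add ha' hb₀, by abel⟩
  have hsubB : B - B ⊆ (A + B) - (A + B) := by
    rintro x ⟨b, hb, b', hb', rfl⟩
    exact ⟨a₀ + b, Set.add_mem_add ha₀ hb, a₀ + b', Set.add_mem_add ha₀ hb', by abel⟩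
  have hspan1 : Submodule.span ℝ ((A + B) - (A + B)) = WA ⊔ WB := by
    apply le_antisymm
    · rw [Submodule.span_le]
      rintro x ⟨p, ⟨a, ha, b, hb, rfl⟩, q, ⟨a', ha', b', hb', rfl⟩, rfl⟩
      have : a + b - (a' + b') = (a - a') + (b - b') := by abel
      show a + b - (a' + b') ∈ (WA ⊔ WB : Submodule ℝ (Euc n))
      rw [this]
      exact Submodule.add_mem_sup (Submodule.subset_span ⟨a, ha, a', ha', rfl⟩)
        (Submodule.subset_span ⟨b, hb, b', hb', rfl⟩)
    · exact sup_le (Submodule.span_le.mpr (hsubA.trans Submodule.subset_span))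
        (Submodule.span_le.mpr (hsubB.trans Submodule.subset_span))
  refine ⟨?_, ?_, ?_⟩
  · show Module.finrank ℝ (Submodule.span ℝ ((A + B) - (A + B)) : Submodule ℝ (Euc n)) = _
    rw [hspan1]
    exact finrank_sup_of_inf_bot WA WB hinf
  · intro hdisj
    set d : Euc n := a₀ - b₀ with hd
    -- span of union
    have hspan2 : vectorSpan ℝ (A ∪ B) = (WA ⊔ WB) ⊔ Submodule.span ℝ {d} := by
      rw [← span_sub_eq]
      apply le_antisymm
      · rw [Submodule.span_le]
        rintro x ⟨p, hp, q, hq, rfl⟩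
        rcases hp with hp | hp <;> rcases hq with hq | hq
        · exact Submodule.mem_sup_left (Submodule.mem_sup_left
            (Submodule.subset_span ⟨p, hp, q, hq, rfl⟩))
        · have : p - q = (p - a₀) + (b₀ - q) + d := by rw [hd]; abel
          show p - q ∈ (WA ⊔ WB ⊔ Submodule.span ℝ {d} : Submodule ℝ (Euc n))
          rw [this]
          exact Submodule.add_mem _
            (Submodule.mem_sup_left (Submodule.add_mem_sup
              (Submodule.subset_span ⟨p, hp, a₀, ha₀, rfl⟩)
              (Submodule.subset_span ⟨b₀, hb₀, q, hq, rfl⟩)))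
            (Submodule.mem_sup_right (Submodule.subset_span rfl))
        · have : p - q = -(((q - a₀) + (b₀ - p) + d)) := by rw [hd]; abel
          show p - q ∈ (WA ⊔ WB ⊔ Submodule.span ℝ {d} : Submodule ℝ (Euc n))
          rw [this]
          exact Submodule.neg_mem _ (Submodule.add_mem _
            (Submodule.mem_sup_left (Submodule.add_mem_sup
              (Submodule.subset_span ⟨q, hq, a₀, ha₀, rfl⟩)
              (Submodule.subset_span ⟨b₀, hb₀, p, hp, rfl⟩)))
            (Submodule.mem_sup_right (Submodule.subset_span rfl)))
        · exact Submodule.mem_sup_left (Submodule.mem_sup_right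
            (Submodule.subset_span ⟨p, hp, q, hq, rfl⟩))
      · refine sup_le (sup_le ?_ ?_) ?_
        · rw [hWA, Submodule.span_le]
          rintro x ⟨a, ha, a', ha', rfl⟩
          exact Submodule.subset_span ⟨a, Or.inl ha, a', Or.inl ha', rfl⟩
        · rw [hWB, Submodule.span_le]
          rintro x ⟨b, hb, b', hb', rfl⟩
          exact Submodule.subset_span ⟨b, Or.inr hb, b', Or.inr hb', rfl⟩
        · rw [Submodule.span_le, Set.singleton_subset_iff]
          exact Submodule.subset_span ⟨a₀, Or.inl ha₀, b₀, Or.inr hb₀, rfl⟩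
    have hdA : WA = (affineSpan ℝ A).direction := by
      rw [direction_affineSpan, ← span_sub_eq]
    have hdB : WB = (affineSpan ℝ B).direction := by
      rw [direction_affineSpan, ← span_sub_eq]
    have hdnot : d ∉ WA ⊔ WB := by
      intro hmem
      obtain ⟨u, hu, w, hw, huw⟩ := Submodule.mem_sup.mp hmem
      have h1 : (-u) +ᵥ a₀ ∈ affineSpan ℝ A :=
        AffineSubspace.vadd_mem_of_mem_direction (hdA ▸ Submodule.neg_mem _ hu)
          (subset_affineSpan ℝ A ha₀)
      have h2 : w +ᵥ b₀ ∈ affineSpan ℝ B :=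
        AffineSubspace.vadd_mem_of_mem_direction (hdB ▸ hw) (subset_affineSpan ℝ B hb₀)
      have heq : (-u) +ᵥ a₀ = w +ᵥ b₀ := by
        simp only [vadd_eq_add]
        have : a₀ - b₀ = u + w := huw ▸ hd
        linear_combination (norm := module) this
      rw [heq] at h1
      exact Set.eq_empty_iff_forall_notMem.mp hdisj _ ⟨h1, h2⟩
    have hd0 : d ≠ 0 := by
      intro h0
      exact hdnot (h0 ▸ Submodule.zero_mem _)
    have hinf2 : (WA ⊔ WB) ⊓ Submodule.span ℝ {d} = ⊥ := by
      rw [eq_bot_iff]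
      rintro x ⟨hx1, hx2⟩
      obtain ⟨c, rfl⟩ := Submodule.mem_span_singleton.mp hx2
      rcases eq_or_ne c 0 with rfl | hc
      · simp
      · exfalso
        have h := Submodule.smul_mem (WA ⊔ WB) c⁻¹ hx1
        rw [inv_smul_smul₀ hc] at h
        exact hdnot h
    rw [setDim_eq_vs, ← direction_affineSpan, affineSpan_convexHull, direction_affineSpan,
      hspan2, finrank_sup_of_inf_bot _ _ hinf2, finrank_sup_of_inf_bot WA WB hinf,
      finrank_span_singleton hd0]
    rfl
  · have hAne : A ≠ ∅ := Set.nonempty_iff_ne_empty.mp ⟨a₀, ha₀⟩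
    have hBne : B ≠ ∅ := Set.nonempty_iff_ne_empty.mp ⟨b₀, hb₀⟩
    constructor
    · simp [l1Sum, edim, hAne]
    · simp [l1Sum, edim, hBne]
end

section
/- Let n = n₁ + n₂ and let σ = (j₁,…,jₙ) ∈ {1,2}ⁿ have exactly n₁ entries equal to 1 and n₂ entries equal to 2. For j ∈ {1,2}, let σ_j(k) = #{ℓ ≤ k : j_ℓ = j}. Let ξ₁,…,ξₙ ∈ ℝ, p₀ = q₀ = 0, and p₁,…,p_{n₁}, q₁,…,q_{n₂}, z ∈ ℝⁿ. Let M be the n×n matrix whose k-th row is p_{σ₁(k)} + q_{σ₂(k)} + ξ_k·z for k = 1,…,n, and let M′ be the n×n matrix whose rows are p_{k₁} + φ₁^σ(k₁)·z for k₁ = 1,…,n₁ followed by q_{k₂} + φ₂^σ(k₂)·z for k₂ = 1,…,n₂, where for j = 1,2 the function φ_j^σ is defined by φ_j^σ(0) = 0 and φ_j^σ(ℓ) = Φ_j(σ_j^{−1}(ℓ)) for ℓ = 1,…,n_j, with σ_j^{−1}(ℓ) = min{k : σ_j(k) = ℓ} and Φ_j(k) = ξ_k + Σ_{ℓ < k,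 j_ℓ ≠ j_{ℓ+1}} (−1)^{j + j_ℓ}·ξ_ℓ. Then |det M| = |det M′|. -/
open MeasureTheory Set Submodule
open scoped RealInnerProductSpace Pointwise Classical

/-- `σ_j(k)`: the number of entries equal to `j` among the first `k` entries of `js`
(entries indexed `1, …, n`). -/
def countJ (js : ℕ → ℕ) (j k : ℕ) : ℕ :=
  ((Finset.Icc 1 k).filter fun ℓ => js ℓ = j).card

/-- `σ_j^{-1}(ℓ) = min{k : σ_j(k) = ℓ}`. -/
noncomputable def invJ (js : ℕ → ℕ) (j ℓ : ℕ) : ℕ :=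
  sInf {k | countJ js j k = ℓ}

/-- `Φ_j(k) = ξ_k + Σ_{ℓ < k, j_ℓ ≠ j_{ℓ+1}} (−1)^{j + j_ℓ} ξ_ℓ`. -/
noncomputable def PhiJ (js : ℕ → ℕ) (ξ : ℕ → ℝ) (j k : ℕ) : ℝ :=
  ξ k + ∑ ℓ ∈ (Finset.Ico 1 k).filter (fun ℓ => js ℓ ≠ js (ℓ + 1)),
    (-1 : ℝ) ^ (j + js ℓ) * ξ ℓ

/-- `φ_j^σ(0) = 0` and `φ_j^σ(ℓ) = Φ_j(σ_j^{-1}(ℓ))` for `ℓ ≥ 1`. -/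
noncomputable def phiJ (js : ℕ → ℕ) (ξ : ℕ → ℝ) (j ℓ : ℕ) : ℝ :=
  if ℓ = 0 then 0 else PhiJ js ξ j (invJ js j ℓ)


/-! Let `r k = p (σ₁ k) + q (σ₂ k) + ξ k • z` be the `k`-th row of `M`, with `r 0 = 0`, and
`Δ k = r k - r (k - 1)`. Then `M` is the matrix of partial sums of the `Δ k`, a unitriangular
operation, so `det M = det Δ`. Summing instead only the `Δ k'` with `k' ≤ k` and `j_k' = j_k`,
again unitriangular, gives `p (σ₁ k) + Φ₁ k • z` when `j_k = 1`: the `p`-differences telescope,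
the `q`-differences vanish and the `ξ`-differences sum by parts to `Φ₁ k`; symmetrically for
`j_k = 2`. These are the rows of `M′` in another order. -/

open Finset

section Colouring

variable (js : ℕ → ℕ)

@[simp]
theorem countJ_zero (j : ℕ) : countJ js j 0 = 0 := by
  simp [countJ]

theorem countJ_succ (j k : ℕ) :
    countJ js j (k + 1) = countJ js j k + if js (k + 1) = j then 1 else 0 := by
  rw [countJ, countJ, ← Finset.insert_Icc_right_eq_Icc_add_one (by omega), filter_insert]
  split_ifs <;> simp [card_insert_of_notMem]

theorem countJ_mono (j : ℕ) : Monotone (countJ js j) :=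
  fun _ _ hab => card_le_card (filter_subset_filter _ (Icc_subset_Icc_right hab))

theorem countJ_eq_succ_of_eq {j k : ℕ} (hk : 1 ≤ k) (hjk : js k = j) :
    countJ js j k = countJ js j (k - 1) + 1 := by
  obtain ⟨k, rfl⟩ := Nat.exists_eq_add_of_le' hk
  simp [countJ_succ, hjk]

theorem one_le_countJ_of_eq {j k : ℕ} (hk : 1 ≤ k) (hjk : js k = j) : 1 ≤ countJ js j k := by
  rw [countJ_eq_succ_of_eq js hk hjk]
  omega

theorem invJ_countJ {j k : ℕ} (hk : 1 ≤ k) (hjk : js k = j) :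
    invJ js j (countJ js j k) = k := by
  refine le_antisymm (Nat.sInf_le rfl) (le_csInf ⟨k, rfl⟩ fun m hm => ?_)
  by_contra! hmk
  have := countJ_mono js j (Nat.le_sub_one_of_lt hmk)
  rw [Set.mem_ofPred_eq, countJ_eq_succ_of_eq js hk hjk] at hm
  omega

theorem phiJ_countJ (ξ : ℕ → ℝ) {j k : ℕ} (hk : 1 ≤ k) (hjk : js k = j) :
    phiJ js ξ j (countJ js j k) = PhiJ js ξ j k := by
  have := one_le_countJ_of_eq js hk hjk
  rw [phiJ, if_neg (by omega), invJ_countJ js hk hjk]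

end Colouring

section Telescoping

variable {G : Type*} [AddCommGroup G] (js : ℕ → ℕ)

theorem sum_filter_sub_countJ (f : ℕ → G) (j k : ℕ) :
    ∑ k' ∈ (range k).filter (fun k' => js (k' + 1) = j),
      (f (countJ js j (k' + 1)) - f (countJ js j k')) = f (countJ js j k) - f 0 := by
  rw [sum_filter_of_ne fun k' _ hne => ?_, sum_range_sub (fun m => f (countJ js j m)), countJ_zero]
  by_contra hk'
  simp [countJ_succ, hk'] at hne

theorem sum_filter_sub_countJ_of_ne (f : ℕ → G) {i j : ℕ} (hij : i ≠ j) (k : ℕ) :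
    ∑ k' ∈ (range k).filter (fun k' => js (k' + 1) = j),
      (f (countJ js i (k' + 1)) - f (countJ js i k')) = 0 :=
  sum_eq_zero fun k' hk' => by
    rw [mem_filter] at hk'
    simp [countJ_succ, hk'.2, hij.symm]

theorem sum_filter_sub_eq_by_parts (P : ℕ → Prop) [DecidablePred P] (x : ℕ → G) (hx : x 0 = 0)
    (k : ℕ) :
    ∑ k' ∈ (range k).filter (fun k' => P (k' + 1)), (x (k' + 1) - x k') =
      (if P k then x k else 0) +
        ∑ ℓ ∈ Ico 1 k, ((if P ℓ then x ℓ else 0) - if P (ℓ + 1) then x ℓ else 0) := by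
  induction k with
  | zero => simp [hx]
  | succ k ih =>
    rcases k.eq_zero_or_pos with rfl | hk
    · by_cases h : P 1 <;> simp [Finset.filter_singleton, h, hx]
    rw [range_add_one, filter_insert, sum_Ico_succ_top hk]
    by_cases hk1 : P (k + 1)
    · rw [if_pos hk1, sum_insert (by simp), ih]
      split_ifs <;> abel
    · rw [if_neg hk1, ih]
      split_ifs <;> abel

/-- The sign `(-1) ^ (j + a)` in `PhiJ` is the jump of the indicator of colour `j` at a colour
change `a ≠ b`. -/
theorem ite_sub_ite_eq_neg_one_pow {a b j : ℕ} (ha : a = 1 ∨ a = 2) (hb : b = 1 ∨ b = 2)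
    (hj : j = 1 ∨ j = 2) (x : ℝ) :
    ((if a = j then x else 0) - if b = j then x else 0) =
      if a ≠ b then (-1 : ℝ) ^ (j + a) * x else 0 := by
  rcases ha with rfl | rfl <;> rcases hb with rfl | rfl <;> rcases hj with rfl | rfl <;> norm_num

theorem sum_filter_sub_eq_PhiJ (ξ : ℕ → ℝ) {j k : ℕ} (hj : j = 1 ∨ j = 2)
    (hjs : ∀ ℓ, 1 ≤ ℓ → ℓ ≤ k → js ℓ = 1 ∨ js ℓ = 2) (hk : 1 ≤ k) (hjk : js k = j) :
    ∑ k' ∈ (range k).filter (fun k' => js (k' + 1) = j),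
      (Function.update ξ 0 0 (k' + 1) - Function.update ξ 0 0 k') = PhiJ js ξ j k := by
  rw [sum_filter_sub_eq_by_parts (fun m => js m = j) _ (by simp), if_pos hjk, PhiJ, sum_filter,
    Function.update_of_ne (by omega)]
  congr 1
  refine sum_congr rfl fun ℓ hℓ => ?_
  rw [Finset.mem_Ico] at hℓ
  rw [Function.update_of_ne (by omega),
    ite_sub_ite_eq_neg_one_pow (hjs ℓ hℓ.1 hℓ.2.le) (hjs (ℓ + 1) (by omega) hℓ.2) hj]

end Telescoping

theorem sum_filter_sub_eq_add_PhiJ_smul {V : Type*} [AddCommGroup V] [Module ℝ V] (js : ℕ → ℕ)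
    (ξ : ℕ → ℝ) (a b r : ℕ → V) (z : V) {i j k : ℕ} (hij : i ≠ j) (hj : j = 1 ∨ j = 2)
    (hjs : ∀ ℓ, 1 ≤ ℓ → ℓ ≤ k → js ℓ = 1 ∨ js ℓ = 2) (hk : 1 ≤ k) (hjk : js k = j)
    (ha : a 0 = 0)
    (hr : ∀ m, r m = a (countJ js j m) + b (countJ js i m) + Function.update ξ 0 0 m • z) :
    ∑ k' ∈ (range k).filter (fun k' => js (k' + 1) = j), (r (k' + 1) - r k') =
      a (countJ js j k) + PhiJ js ξ j k • z := by
  have hsplit : ∀ m, r (m + 1) - r m =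
      (a (countJ js j (m + 1)) - a (countJ js j m)) +
        (b (countJ js i (m + 1)) - b (countJ js i m)) +
        (Function.update ξ 0 0 (m + 1) - Function.update ξ 0 0 m) • z := by
    intro m
    rw [hr, hr, sub_smul]
    abel
  simp only [hsplit, sum_add_distrib, ← sum_smul, sum_filter_sub_countJ, ha, sub_zero,
    sum_filter_sub_countJ_of_ne js b hij, add_zero, sum_filter_sub_eq_PhiJ js ξ hj hjs hk hjk]

section SameColourSum

variable (R : Type*) {α : Type*} [DecidableEq α] (c : ℕ → α) (n : ℕ)

def sameColourSum [Zero R] [One R] : Matrix (Fin n) (Fin n) R :=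
  Matrix.of fun k k' => if k' ≤ k ∧ c k' = c k then 1 else 0

theorem det_sameColourSum [CommRing R] : (sameColourSum R c n).det = 1 := by
  rw [Matrix.det_of_isLowerTriangular _ fun k k' hkk' => ?_]
  · simp [sameColourSum]
  · have : ¬ k' ≤ k := not_le.mpr hkk'
    simp [sameColourSum, this]

theorem sameColourSum_mul_of_apply [Semiring R] {ι : Type*} (f : ℕ → ι → R) (k : Fin n)
    (i : ι) :
    (sameColourSum R c n * Matrix.of fun k : Fin n => f k) k i =
      ∑ k' ∈ (range (k + 1)).filter (fun k' => c k' = c k), f k' i := by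
  simp only [Matrix.mul_apply, sameColourSum, Matrix.of_apply, ite_mul, one_mul, zero_mul,
    Fin.le_iff_val_le_val]
  rw [Fin.sum_univ_eq_sum_range (fun m => if m ≤ k ∧ c m = c k then f m i else 0), ← sum_filter]
  congr 1
  ext m
  simp only [mem_filter, Finset.mem_range]
  have := k.isLt
  exact ⟨fun h => ⟨by omega, h.2.2⟩, fun h => ⟨by omega, by omega, h.2⟩⟩

end SameColourSum

/-- Row `k` of `M` (rows indexed from `1`); `ξ 0` is replaced by `0` so that row `0` vanishes. -/
def gaussRow (js : ℕ → ℕ) (ξ : ℕ → ℝ) {V : Type*} [AddCommGroup V] [Module ℝ V]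
    (p q : ℕ → V) (z : V) (k : ℕ) : V :=
  p (countJ js 1 k) + q (countJ js 2 k) + Function.update ξ 0 0 k • z

theorem sameColourSum_mul_gaussRow_sub_apply {n : ℕ} (js : ℕ → ℕ) (ξ : ℕ → ℝ)
    (z : Fin n → ℝ) (p q : ℕ → Fin n → ℝ) (hp0 : p 0 = 0) (hq0 : q 0 = 0)
    (hjs : ∀ k, 1 ≤ k → k ≤ n → js k = 1 ∨ js k = 2) (k i : Fin n) :
    (sameColourSum ℝ (fun k => js (k + 1)) n *
        Matrix.of fun k : Fin n => gaussRow js ξ p q z (k + 1) - gaussRow js ξ p q z k) k i =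
      if js (k + 1) = 1 then p (countJ js 1 (k + 1)) i + PhiJ js ξ 1 (k + 1) * z i
      else q (countJ js 2 (k + 1)) i + PhiJ js ξ 2 (k + 1) * z i := by
  set r := gaussRow js ξ p q z with hr
  rw [sameColourSum_mul_of_apply _ _ _ fun m => r (m + 1) - r m, ← Finset.sum_apply]
  have hk : 1 ≤ (k : ℕ) + 1 := by omega
  have hjs' : ∀ ℓ, 1 ≤ ℓ → ℓ ≤ (k : ℕ) + 1 → js ℓ = 1 ∨ js ℓ = 2 :=
    fun ℓ h1 h2 => hjs ℓ h1 (by omega)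
  split_ifs with h
  · rw [h, sum_filter_sub_eq_add_PhiJ_smul js ξ p q r z (i := 2) (by omega) (by omega) hjs' hk h
      hp0 fun _ => by rw [hr, gaussRow]]
    rfl
  · have h2 := (hjs _ hk k.isLt).resolve_left h
    rw [h2, sum_filter_sub_eq_add_PhiJ_smul js ξ q p r z (i := 1) (by omega) (by omega) hjs' hk h2
      hq0 fun _ => by rw [hr, gaussRow, add_comm (q _)]]
    rfl

/-- The (0-indexed) row of `M′` holding the row of colour `js (k + 1)` that comes from
position `k`: colour `1` rows first, then colour `2` rows, each in their original order. -/
def colourRank (js : ℕ → ℕ) (n₁ k : ℕ) : ℕ :=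
  if js (k + 1) = 1 then countJ js 1 (k + 1) - 1 else n₁ + (countJ js 2 (k + 1) - 1)

section ColourRank

variable {js : ℕ → ℕ} {n n₁ n₂ : ℕ} (hn : n = n₁ + n₂)
  (hjs : ∀ k, 1 ≤ k → k ≤ n → js k = 1 ∨ js k = 2)
  (hc1 : countJ js 1 n = n₁) (hc2 : countJ js 2 n = n₂)
include hc1

theorem colourRank_lt_iff {k : ℕ} (hk : k < n) : colourRank js n₁ k < n₁ ↔ js (k + 1) = 1 := by
  by_cases h : js (k + 1) = 1
  · have := countJ_mono js 1 (show k + 1 ≤ n by omega)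
    have := one_le_countJ_of_eq js (by omega) h
    simp only [colourRank, h, if_true, iff_true]
    omega
  · simp [colourRank, h]

include hn hjs hc2 in
theorem colourRank_lt {k : ℕ} (hk : k < n) : colourRank js n₁ k < n := by
  unfold colourRank
  split_ifs with h
  · have := countJ_mono js 1 (show k + 1 ≤ n by omega)
    have := one_le_countJ_of_eq js (by omega) h
    omega
  · have h2 : js (k + 1) = 2 := (hjs (k + 1) (by omega) hk).resolve_left h
    have := countJ_mono js 2 (show k + 1 ≤ n by omega)
    have := one_le_countJ_of_eq js (by omega) h2
    omega

include hjs in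
theorem colourRank_injOn : Set.InjOn (colourRank js n₁) (Set.Iio n) := by
  intro a ha b hb hab
  simp only [Set.mem_Iio] at ha hb
  have hcol : js (a + 1) = 1 ↔ js (b + 1) = 1 := by
    rw [← colourRank_lt_iff hc1 ha, ← colourRank_lt_iff hc1 hb, hab]
  suffices ∃ j, js (a + 1) = j ∧ js (b + 1) = j ∧ countJ js j (a + 1) = countJ js j (b + 1) by
    obtain ⟨j, hja, hjb, hcount⟩ := this
    have := invJ_countJ js (by omega) hja
    rw [hcount, invJ_countJ js (by omega) hjb] at this
    omega
  by_cases h : js (a + 1) = 1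
  · have h' := hcol.mp h
    have := one_le_countJ_of_eq js (by omega) h
    have := one_le_countJ_of_eq js (by omega) h'
    simp only [colourRank, h, h', if_true] at hab
    exact ⟨1, h, h', by omega⟩
  · have h' : ¬ js (b + 1) = 1 := mt hcol.mpr h
    have ha2 : js (a + 1) = 2 := (hjs (a + 1) (by omega) ha).resolve_left h
    have hb2 : js (b + 1) = 2 := (hjs (b + 1) (by omega) hb).resolve_left h'
    have := one_le_countJ_of_eq js (by omega) ha2
    have := one_le_countJ_of_eq js (by omega) hb2
    simp only [colourRank, h, h', if_false] at hab
    exact ⟨2, ha2, hb2, by omega⟩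

include hn hjs hc2 in
theorem exists_perm_colourRank :
    ∃ e : Equiv.Perm (Fin n), ∀ k : Fin n, (e k : ℕ) = colourRank js n₁ k := by
  let f : Fin n → Fin n := fun k => ⟨colourRank js n₁ k, colourRank_lt hn hjs hc1 hc2 k.isLt⟩
  have hf : Function.Injective f := fun a b hab =>
    Fin.ext (colourRank_injOn hjs hc1 a.isLt b.isLt (congrArg Fin.val hab))
  exact ⟨Equiv.ofBijective f (Finite.injective_iff_bijective.mp hf), fun _ => rfl⟩

include hjs in
theorem row_colourRank (ξ : ℕ → ℝ) (z : Fin n → ℝ) (p q : ℕ → Fin n → ℝ)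
    (M' : Matrix (Fin n) (Fin n) ℝ)
    (hM' : ∀ (k i : Fin n),
      M' k i = if (k : ℕ) < n₁ then
          p ((k : ℕ) + 1) i + phiJ js ξ 1 ((k : ℕ) + 1) * z i
        else
          q ((k : ℕ) + 1 - n₁) i + phiJ js ξ 2 ((k : ℕ) + 1 - n₁) * z i)
    {e : Equiv.Perm (Fin n)} (he : ∀ k : Fin n, (e k : ℕ) = colourRank js n₁ k) (k i : Fin n) :
    M' (e k) i = if js (k + 1) = 1 then p (countJ js 1 (k + 1)) i + PhiJ js ξ 1 (k + 1) * z i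
      else q (countJ js 2 (k + 1)) i + PhiJ js ξ 2 (k + 1) * z i := by
  rw [hM', he]
  by_cases h : js (k + 1) = 1
  · have := one_le_countJ_of_eq js (by omega) h
    rw [if_pos ((colourRank_lt_iff hc1 k.isLt).mpr h), if_pos h, colourRank, if_pos h,
      Nat.sub_add_cancel this, phiJ_countJ js ξ (by omega) h]
  · have h2 : js (k + 1) = 2 := (hjs (k + 1) (by omega) k.isLt).resolve_left h
    have := one_le_countJ_of_eq js (by omega) h2
    rw [if_neg (mt (colourRank_lt_iff hc1 k.isLt).mp h), if_neg h, colourRank, if_neg h,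
      show n₁ + (countJ js 2 (k + 1) - 1) + 1 - n₁ = countJ js 2 (k + 1) by omega,
      phiJ_countJ js ξ (by omega) h2]

end ColourRank

/-- **Lemma 4.3.** The Gauss-elimination lemma: `|det M| = |det M′|` where the rows of `M`
are `p_{σ₁(k)} + q_{σ₂(k)} + ξ_k z` and the rows of `M′` are `p_{k₁} + φ₁^σ(k₁) z` followed
by `q_{k₂} + φ₂^σ(k₂) z`. -/
theorem gauss_elimination_det (n n₁ n₂ : ℕ) (hn : n = n₁ + n₂) (js : ℕ → ℕ)
    (hjs : ∀ k, 1 ≤ k → k ≤ n → js k = 1 ∨ js k = 2)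
    (hc1 : countJ js 1 n = n₁) (hc2 : countJ js 2 n = n₂)
    (ξ : ℕ → ℝ) (z : Fin n → ℝ) (p q : ℕ → Fin n → ℝ)
    (hp0 : p 0 = 0) (hq0 : q 0 = 0)
    (M M' : Matrix (Fin n) (Fin n) ℝ)
    (hM : ∀ (k i : Fin n),
      M k i = p (countJ js 1 ((k : ℕ) + 1)) i + q (countJ js 2 ((k : ℕ) + 1)) i +
        ξ ((k : ℕ) + 1) * z i)
    (hM' : ∀ (k i : Fin n),
      M' k i = if (k : ℕ) < n₁ then
          p ((k : ℕ) + 1) i + phiJ js ξ 1 ((k : ℕ) + 1) * z i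
        else
          q ((k : ℕ) + 1 - n₁) i + phiJ js ξ 2 ((k : ℕ) + 1 - n₁) * z i) :
    |M.det| = |M'.det| := by
  set r := gaussRow js ξ p q z
  set Δ : Matrix (Fin n) (Fin n) ℝ := Matrix.of fun k : Fin n => r (k + 1) - r k with hΔ
  have hM_eq : M = sameColourSum ℝ (fun _ => ()) n * Δ := by
    ext k i
    rw [hΔ, sameColourSum_mul_of_apply _ _ _ fun m => r (m + 1) - r m,
      filter_true_of_mem fun _ _ => rfl, ← Finset.sum_apply, sum_range_sub r]
    simp [r, gaussRow, hM, hp0, hq0]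
  obtain ⟨e, he⟩ := exists_perm_colourRank hn hjs hc1 hc2
  have hM'_eq : M'.submatrix e id = sameColourSum ℝ (fun k => js (k + 1)) n * Δ := by
    ext k i
    rw [Matrix.submatrix_apply, id, row_colourRank hjs hc1 ξ z p q M' hM' he, hΔ,
      sameColourSum_mul_gaussRow_sub_apply js ξ z p q hp0 hq0 hjs]
  calc |M.det| = |(sameColourSum ℝ (fun k => js (k + 1)) n * Δ).det| := by
        rw [hM_eq, Matrix.det_mul, Matrix.det_mul, det_sameColourSum, det_sameColourSum]
    _ = |M'.det| := by
        rw [← hM'_eq]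
        exact Matrix.abs_det_submatrix_equiv_equiv e (Equiv.refl _) M'
end
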